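/- arXiv:2602.12333 — 5 statements merged into one kernel-verified Lean document; each statement's English description precedes it below -/
import Mathlib

section
/- Let R be a commutative ring and P a finitely generated projective R-module such that the canonical ring homomorphism R → End_R(P) (sending r to multiplication by r) is bijective. Then P is an invertible R-module, i.e. finitely generated projective of rank 1. -/
open scoped TensorProduct

open Module LinearMap

theorem aux_dth_bij {R : Type} [CommRing R] {P : Type} [AddCommGroup P] [Module R P]
    (hfin : Module.Finite R P) (hproj : Module.Projective R P) :
    Function.Bijective (dualTensorHom R P P) := by
  obtain ⟨n, f, g, hsurj, hinj, hfg⟩ := Module.Finite.exists_comp_eq_id_of_projective R P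
  set F := Fin n → R
  -- retract maps on tensor products
  set α : Module.Dual R P ⊗[R] P →ₗ[R] Module.Dual R F ⊗[R] F :=
    TensorProduct.map f.dualMap g with hα
  set β : Module.Dual R F ⊗[R] F →ₗ[R] Module.Dual R P ⊗[R] P :=
    TensorProduct.map g.dualMap f with hβ
  have hfg' : ∀ p, f (g p) = p := fun p => by
    simpa using DFunLike.congr_fun hfg p
  have hβα : ∀ x, β (α x) = x := by
    intro x
    induction x using TensorProduct.induction_on with
    | zero => simp
    | tmul φ p =>
        simp only [hα, hβ, TensorProduct.map_tmul]
        congr 1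
        · ext y; simp [hfg' y]
        · exact hfg' p
    | add x y hx hy => simp [map_add, hx, hy]
  -- commuting squares
  have hcomm1 : ∀ x : Module.Dual R P ⊗[R] P,
      dualTensorHom R F F (α x) = g ∘ₗ (dualTensorHom R P P x) ∘ₗ f := by
    intro x
    induction x using TensorProduct.induction_on with
    | zero => simp
    | tmul φ p => ext y; simp [hα]; rfl
    | add x y hx hy => simp only [map_add, hx, hy]; ext y; simp
  have hcomm2 : ∀ x : Module.Dual R F ⊗[R] F,
      dualTensorHom R P P (β x) = f ∘ₗ (dualTensorHom R F F x) ∘ₗ g := by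
    intro x
    induction x using TensorProduct.induction_on with
    | zero => simp
    | tmul φ p => ext y; simp [hβ]
    | add x y hx hy => simp only [map_add, hx, hy]; ext y; simp
  have hFbij : Function.Bijective (dualTensorHom R F F) := by
    have := (dualTensorHomEquiv R F F).bijective
    rwa [show ((dualTensorHomEquiv R F F : Module.Dual R F ⊗[R] F ≃ₗ[R] (F →ₗ[R] F)) :
      Module.Dual R F ⊗[R] F → (F →ₗ[R] F)) = dualTensorHom R F F from
        rfl] at this
  constructor
  · intro x y hxy
    have : α x = α y := hFbij.1 (by rw [hcomm1, hcomm1, hxy])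
    rw [← hβα x, ← hβα y, this]
  · intro h
    obtain ⟨k, hk⟩ := hFbij.2 (g ∘ₗ h ∘ₗ f)
    refine ⟨β k, ?_⟩
    rw [hcomm2, hk]
    ext p
    simp only [LinearMap.comp_apply]
    rw [hfg' p, hfg' (h p)]

/-- If `P` is a finitely generated projective `R`-module such that the canonical map
`R → End_R(P)` is bijective, then `P` is invertible, i.e. it admits a tensor inverse. -/
theorem stmt5 {R : Type} [CommRing R] {P : Type} [AddCommGroup P] [Module R P]
    (hfin : Module.Finite R P) (hproj : Module.Projective R P)
    (hend : Function.Bijective (algebraMap R (Module.End R P))) :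
    ∃ (Q : Type) (_ : AddCommGroup Q) (_ : Module R Q),
      Nonempty ((P ⊗[R] Q) ≃ₗ[R] R) := by
  refine ⟨Module.Dual R P, inferInstance, inferInstance, ⟨?_⟩⟩
  have e1 : Module.Dual R P ⊗[R] P ≃ₗ[R] Module.End R P :=
    LinearEquiv.ofBijective (dualTensorHom R P P) (aux_dth_bij hfin hproj)
  have e2 : R ≃ₗ[R] Module.End R P :=
    LinearEquiv.ofBijective (Algebra.linearMap R (Module.End R P)) hend
  exact (TensorProduct.comm R P (Module.Dual R P)) ≪≫ₗ e1 ≪≫ₗ e2.symm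
end

section
/- Let G be a group, N a normal subgroup containing the commutator subgroup [G,G], A an abelian group, and χ : N → A a homomorphism satisfying χ(gng⁻¹) = χ(n) for all g ∈ G, n ∈ N. Then the map θ(g,h) := χ(ghg⁻¹h⁻¹) is well defined, descends to a map θ̄ : G/N × G/N → A, and θ̄ is bimultiplicative (θ̄(xy, z) = θ̄(x,z)·θ̄(y,z) and θ̄(x, yz) = θ̄(x,y)·θ̄(x,z)) and alternating (θ̄(x,x) = 1). Moreover, if G/N has exponent p, then the image of θ̄ lies in the p-torsion subgroup of A. -/
open scoped commutatorElement

/-- Let `N ⊴ G` contain all commutators, `A` abelian, and `χ : N → A` a homomorphism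
invariant under `G`-conjugation.  Then `θ(g,h) := χ(⁅g,h⁆)` descends to `G/N × G/N`,
is bimultiplicative and alternating, and if `G/N` has exponent `p` its values are
`p`-torsion. -/
theorem stmt6 {G A : Type*} [Group G] [CommGroup A] (N : Subgroup G)
    (hN : N.Normal) (hcomm : ∀ g h : G, ⁅g, h⁆ ∈ N) (χ : ↥N →* A)
    (hχ : ∀ (g n : G) (hn : n ∈ N),
      χ ⟨g * n * g⁻¹, hN.conj_mem n hn g⟩ = χ ⟨n, hn⟩)
    (p : ℕ) (hexp : ∀ g : G, g ^ p ∈ N) :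
    ∀ θ : G → G → A, (θ = fun g h => χ ⟨⁅g, h⁆, hcomm g h⟩) →
      (∀ g g' h h' : G, g⁻¹ * g' ∈ N → h⁻¹ * h' ∈ N → θ g h = θ g' h') ∧
      (∀ g₁ g₂ h : G, θ (g₁ * g₂) h = θ g₁ h * θ g₂ h) ∧
      (∀ g h₁ h₂ : G, θ g (h₁ * h₂) = θ g h₁ * θ g h₂) ∧
      (∀ g : G, θ g g = 1) ∧
      (∀ g h : G, θ g h ^ p = 1) := by
  intro θ hθ
  subst hθ
  -- proof irrelevance for χ
  have hirr : ∀ (n m : G) (hn : n ∈ N) (hm : m ∈ N), n = m →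
      χ ⟨n, hn⟩ = χ ⟨m, hm⟩ := by
    rintro n m hn hm rfl; rfl
  have hmul : ∀ (n m : G) (hn : n ∈ N) (hm : m ∈ N) (h : n * m ∈ N),
      χ ⟨n * m, h⟩ = χ ⟨n, hn⟩ * χ ⟨m, hm⟩ := by
    intro n m hn hm h
    have : (⟨n * m, h⟩ : N) = ⟨n, hn⟩ * ⟨m, hm⟩ := rfl
    rw [this, map_mul]
  have hinv : ∀ (n : G) (hn : n ∈ N) (h : n⁻¹ ∈ N),
      χ ⟨n⁻¹, h⟩ = (χ ⟨n, hn⟩)⁻¹ := by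
    intro n hn h
    have : (⟨n⁻¹, h⟩ : N) = (⟨n, hn⟩)⁻¹ := rfl
    rw [this, map_inv]
  -- left multiplicativity
  have lmul : ∀ g₁ g₂ h : G,
      χ ⟨⁅g₁ * g₂, h⁆, hcomm _ _⟩ = χ ⟨⁅g₁, h⁆, hcomm _ _⟩ * χ ⟨⁅g₂, h⁆, hcomm _ _⟩ := by
    intro g₁ g₂ h
    have e : ⁅g₁ * g₂, h⁆ = (g₁ * ⁅g₂, h⁆ * g₁⁻¹) * ⁅g₁, h⁆ := by
      simp only [commutatorElement_def]; group
    rw [hirr _ _ (hcomm _ _) (mul_mem (hN.conj_mem _ (hcomm g₂ h) g₁) (hcomm g₁ h)) e,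
      hmul _ _ (hN.conj_mem _ (hcomm g₂ h) g₁) (hcomm g₁ h), hχ g₁ _ (hcomm g₂ h),
      mul_comm]
  -- right multiplicativity
  have rmul : ∀ g h₁ h₂ : G,
      χ ⟨⁅g, h₁ * h₂⁆, hcomm _ _⟩ = χ ⟨⁅g, h₁⁆, hcomm _ _⟩ * χ ⟨⁅g, h₂⁆, hcomm _ _⟩ := by
    intro g h₁ h₂
    have e : ⁅g, h₁ * h₂⁆ = ⁅g, h₁⁆ * (h₁ * ⁅g, h₂⁆ * h₁⁻¹) := by
      simp only [commutatorElement_def]; group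
    rw [hirr _ _ (hcomm _ _) (mul_mem (hcomm g h₁) (hN.conj_mem _ (hcomm g h₂) h₁)) e,
      hmul _ _ (hcomm g h₁) (hN.conj_mem _ (hcomm g h₂) h₁), hχ h₁ _ (hcomm g h₂)]
  -- θ(n, h) = 1 for n ∈ N
  have lkill : ∀ (n : G), n ∈ N → ∀ h : G, χ ⟨⁅n, h⁆, hcomm _ _⟩ = 1 := by
    intro n hn h
    have e : ⁅n, h⁆ = n * (h * n⁻¹ * h⁻¹) := by
      simp only [commutatorElement_def]; group
    rw [hirr _ _ (hcomm _ _) (mul_mem hn (hN.conj_mem _ (inv_mem hn) h)) e,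
      hmul _ _ hn (hN.conj_mem _ (inv_mem hn) h), hχ h _ (inv_mem hn),
      hinv _ hn (inv_mem hn), mul_inv_cancel]
  have rkill : ∀ (g m : G), m ∈ N → χ ⟨⁅g, m⁆, hcomm _ _⟩ = 1 := by
    intro g m hm
    have e : ⁅g, m⁆ = (g * m * g⁻¹) * m⁻¹ := by
      rw [commutatorElement_def]
    rw [hirr _ _ (hcomm _ _) (mul_mem (hN.conj_mem _ hm g) (inv_mem hm)) e,
      hmul _ _ (hN.conj_mem _ hm g) (inv_mem hm), hχ g _ hm,
      hinv _ hm (inv_mem hm), mul_inv_cancel]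
  refine ⟨?_, fun g₁ g₂ h => lmul g₁ g₂ h, fun g h₁ h₂ => rmul g h₁ h₂, ?_, ?_⟩
  · -- well-definedness
    intro g g' h h' hg hh
    have eg : g' = g * (g⁻¹ * g') := by group
    have eh : h' = h * (h⁻¹ * h') := by group
    calc χ ⟨⁅g, h⁆, hcomm _ _⟩
        = χ ⟨⁅g, h⁆, hcomm _ _⟩ * χ ⟨⁅g⁻¹ * g', h⁆, hcomm _ _⟩ := by
          rw [lkill _ hg, mul_one]
      _ = χ ⟨⁅g', h⁆, hcomm _ _⟩ := by
          rw [← lmul]; exact hirr _ _ _ _ (by rw [← eg])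
      _ = χ ⟨⁅g', h⁆, hcomm _ _⟩ * χ ⟨⁅g', h⁻¹ * h'⁆, hcomm _ _⟩ := by
          rw [rkill _ _ hh, mul_one]
      _ = χ ⟨⁅g', h'⁆, hcomm _ _⟩ := by
          rw [← rmul]; exact hirr _ _ _ _ (by rw [← eh])
  · -- alternating
    intro g
    have e : ⁅g, g⁆ = (1 : G) := by simp only [commutatorElement_def]; group
    show χ ⟨⁅g, g⁆, hcomm g g⟩ = 1
    rw [hirr _ _ (hcomm _ _) (one_mem N) e]
    exact map_one χ
  · -- p-torsion
    intro g h
    show χ ⟨⁅g, h⁆, hcomm g h⟩ ^ p = 1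
    have pow : ∀ k : ℕ, χ ⟨⁅g ^ k, h⁆, hcomm _ _⟩ = χ ⟨⁅g, h⁆, hcomm _ _⟩ ^ k := by
      intro k
      induction k with
      | zero =>
        simp only [pow_zero]
        rw [hirr _ _ (hcomm _ _) (one_mem N) (by simp only [commutatorElement_def]; group)]
        exact map_one χ
      | succ k ih =>
        rw [pow_succ, lmul, ih, pow_succ, mul_comm]
    have h1 : χ ⟨⁅g ^ p, h⁆, hcomm _ _⟩ = 1 := lkill _ (hexp g) h
    rw [← pow, h1]
end

section
/- Let p be an odd prime, K a finite p-group, K⁺ a normal subgroup of K such that V := K/K⁺ is an elementary abelian p-group, and χ : K⁺ → k^× a character (k a field with char k ∤ |K|) centralized by K, such that the induced pairing θ(g,h) = χ([g,h]) on V is perfect. Let W ⊆ V be a Lagrangian subspace with preimage K_W ⊆ K. Then: (a) the set of characters ν : K_W → k^× extending χ is nonempty provided k contains enough p-power roots of unity (e.g. k algebraically closed), and has cardinality [K_W : K⁺]; (b) the conjugation action of K on this set of extensions is transitive, with the stabilizer of each ν equal to K_W. -/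
open scoped commutatorElement

section Aux

lemma auxDual {k : Type*} [Field k] {G : Type*} [CommGroup G] [Finite G]
    (hprim : ∀ n : ℕ, n ∣ Nat.card G → ∃ ζ : k, IsPrimitiveRoot ζ n) :
    Nonempty ((G →* kˣ) ≃* G) := by
  have h := hprim (Monoid.exponent G) Group.exponent_dvd_nat_card
  letI : HasEnoughRootsOfUnity k (Monoid.exponent G) := ⟨h, inferInstance⟩
  exact CommGroup.monoidHom_mulEquiv_of_hasEnoughRootsOfUnity G k

/-- The subgroup of characters trivial on a subgroup `N`. -/
def trivOn {Γ : Type*} [Group Γ] (N : Subgroup Γ) (A : Type*) [CommGroup A] :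
    Subgroup (Γ →* A) where
  carrier := {φ | ∀ x ∈ N, φ x = 1}
  one_mem' := fun x _ => rfl
  mul_mem' := by intro a b ha hb x hx; simp [ha x hx, hb x hx]
  inv_mem' := by intro a ha x hx; simp [ha x hx]

lemma mem_trivOn {Γ : Type*} [Group Γ] {N : Subgroup Γ} {A : Type*} [CommGroup A]
    {φ : Γ →* A} : φ ∈ trivOn N A ↔ ∀ x ∈ N, φ x = 1 := Iff.rfl

noncomputable def trivOnEquiv {Γ : Type*} [Group Γ] (N : Subgroup Γ) [N.Normal]
    (A : Type*) [CommGroup A] : ↥(trivOn N A) ≃ ((Γ ⧸ N) →* A) where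
  toFun φ := QuotientGroup.lift N φ.1 φ.2
  invFun Φ := ⟨Φ.comp (QuotientGroup.mk' N), fun x hx => by
    simp [(QuotientGroup.eq_one_iff x).mpr hx]⟩
  left_inv φ := by ext x; rfl
  right_inv Φ := by
    apply MonoidHom.ext; intro q
    induction q using QuotientGroup.induction_on with
    | H x => rfl

/-- restriction homomorphism -/
def resHom {Γ : Type*} [Group Γ] (H : Subgroup Γ) (A : Type*) [CommGroup A] :
    (Γ →* A) →* (↥H →* A) where
  toFun φ := φ.comp H.subtype
  map_one' := rfl
  map_mul' _ _ := rfl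

lemma auxExt {k : Type*} [Field k] {G : Type*} [CommGroup G] [Finite G]
    (hprim : ∀ n : ℕ, n ∣ Nat.card G → ∃ ζ : k, IsPrimitiveRoot ζ n)
    (H : Subgroup G) (ψ : ↥H →* kˣ) :
    ∃ Φ : G →* kˣ, ∀ x : ↥H, Φ ↑x = ψ x := by
  obtain ⟨eG⟩ := auxDual hprim
  have hGH : Nat.card ↥H ∣ Nat.card G := Subgroup.card_subgroup_dvd_card H
  have hGQ : Nat.card (G ⧸ H) ∣ Nat.card G :=
    Dvd.intro _ (Subgroup.card_eq_card_quotient_mul_card_subgroup H).symm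
  obtain ⟨eH⟩ := auxDual (G := ↥H) (fun n hn => hprim n (hn.trans hGH))
  obtain ⟨eQ⟩ := auxDual (G := G ⧸ H) (fun n hn => hprim n (hn.trans hGQ))
  haveI : Finite (G →* kˣ) := Finite.of_equiv G eG.symm.toEquiv
  haveI : Finite (↥H →* kˣ) := Finite.of_equiv ↥H eH.symm.toEquiv
  set r := resHom H kˣ with hr
  have hker : r.ker = trivOn H kˣ := by
    ext φ
    simp only [MonoidHom.mem_ker, mem_trivOn]
    constructor
    · intro h1 x hx
      have := DFunLike.congr_fun h1 (⟨x, hx⟩ : ↥H)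
      exact this
    · intro h1; apply MonoidHom.ext; intro x; exact h1 x.1 x.2
  have hcard_ker : Nat.card r.ker = Nat.card (G ⧸ H) := by
    rw [hker, Nat.card_congr (trivOnEquiv H kˣ)]
    exact Nat.card_congr eQ.toEquiv
  have h1 : Nat.card (G →* kˣ) = Nat.card r.range * Nat.card r.ker := by
    rw [Subgroup.card_eq_card_quotient_mul_card_subgroup r.ker,
      Nat.card_congr (QuotientGroup.quotientKerEquivRange r).toEquiv]
  have h2 : Nat.card G = Nat.card (G ⧸ H) * Nat.card ↥H :=
    Subgroup.card_eq_card_quotient_mul_card_subgroup H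
  have hcardrange : Nat.card r.range = Nat.card (↥H →* kˣ) := by
    have e1 : Nat.card (G →* kˣ) = Nat.card G := Nat.card_congr eG.toEquiv
    have e2 : Nat.card (↥H →* kˣ) = Nat.card ↥H := Nat.card_congr eH.toEquiv
    have hq : Nat.card (G ⧸ H) ≠ 0 := Nat.card_pos.ne'
    have : Nat.card r.range * Nat.card (G ⧸ H) = Nat.card (↥H →* kˣ) * Nat.card (G ⧸ H) := by
      rw [e2, Nat.mul_comm (Nat.card ↥H), ← h2, ← e1, h1, hcard_ker]
    exact Nat.eq_of_mul_eq_mul_right (Nat.pos_of_ne_zero hq) this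
  have : r.range = ⊤ := Subgroup.eq_top_of_card_eq _ hcardrange
  have hsurj : Function.Surjective r := MonoidHom.range_eq_top.mp this
  obtain ⟨Φ, hΦ⟩ := hsurj ψ
  exact ⟨Φ, fun x => by rw [← hΦ]; rfl⟩

lemma auxDescend {Γ G A : Type*} [Group Γ] [Group G] [CommGroup A]
    (f : Γ →* G) (ψ : Γ →* A) (h : f.ker ≤ ψ.ker) :
    ∃ ψ' : ↥f.range →* A, ∀ x : Γ, ψ' ⟨f x, MonoidHom.mem_range.mpr ⟨x, rfl⟩⟩ = ψ x := by
  refine ⟨(QuotientGroup.lift f.ker ψ h).comp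
    ((QuotientGroup.quotientKerEquivRange f).symm : ↥f.range →* Γ ⧸ f.ker), fun x => ?_⟩
  have he : (QuotientGroup.quotientKerEquivRange f) (QuotientGroup.mk x)
      = ⟨f x, MonoidHom.mem_range.mpr ⟨x, rfl⟩⟩ := rfl
  have h2 : (QuotientGroup.quotientKerEquivRange f).symm
      ⟨f x, MonoidHom.mem_range.mpr ⟨x, rfl⟩⟩ = QuotientGroup.mk x := by
    rw [← he, MulEquiv.symm_apply_apply]
  simp [h2]

lemma auxMulComm {Γ : Type*} [Group Γ] (N : Subgroup Γ) [N.Normal]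
    (h : ∀ a b : Γ, ⁅a, b⁆ ∈ N) (x y : Γ ⧸ N) : x * y = y * x := by
  induction x using QuotientGroup.induction_on with
  | H a =>
  induction y using QuotientGroup.induction_on with
  | H b =>
  rw [← QuotientGroup.mk_mul, ← QuotientGroup.mk_mul, QuotientGroup.eq]
  have : (a * b)⁻¹ * (b * a) = ⁅b⁻¹, a⁻¹⁆ := by group
  rw [this]; exact h _ _

lemma auxEqOfLe {Γ : Type*} [Group Γ] {H K : Subgroup Γ} [Finite ↥K] (h : H ≤ K)
    (hc : Nat.card ↥K ≤ Nat.card ↥H) : H = K := by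
  haveI : Finite ↥H := Finite.of_injective
    (fun x : ↥H => (⟨↑x, h x.2⟩ : ↥K))
    (by intro a b hab; simp only [Subtype.mk.injEq] at hab; exact Subtype.ext hab)
  have hco : Nat.card ↥(H.subgroupOf K) = Nat.card ↥H :=
    Nat.card_congr (Subgroup.subgroupOfEquivOfLe h).toEquiv
  have : Nat.card ↥(H.subgroupOf K) = Nat.card ↥K := by
    refine le_antisymm (Subgroup.card_le_card_group _) ?_
    rw [hco]; exact hc
  have := Subgroup.eq_top_of_card_eq _ this
  exact le_antisymm h (Subgroup.subgroupOf_eq_top.mp this)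

end Aux

/-- Extensions of the central character `χ` of a finite Heisenberg triple to the
preimage `K_W` of a Lagrangian `W`: the set of extending characters is nonempty
(given enough `p`-power roots of unity in `k`), has cardinality `[K_W : K⁺]`, the
conjugation action of `K` on it is transitive, and the stabilizer of each extension
is exactly `K_W`. -/
theorem stmt11 {p : ℕ} (hp : p.Prime) (hodd : Odd p)
    {K : Type*} [Group K] [Finite K] (hK : IsPGroup p K)
    (Kplus : Subgroup K) [hKpN : Kplus.Normal]
    (hcomm : ∀ g h : K, ⁅g, h⁆ ∈ Kplus)
    (helem : ∀ g : K, g ^ p ∈ Kplus)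
    {k : Type*} [Field k]
    (hchar : ¬ ringChar k ∣ Nat.card K)
    (hroots : ∀ m : ℕ, p ^ m ∣ Nat.card K → ∃ ζ : k, IsPrimitiveRoot ζ (p ^ m))
    (χ : ↥Kplus →* kˣ)
    (hχinv : ∀ (g m : K) (hm : m ∈ Kplus),
      χ ⟨g * m * g⁻¹, hKpN.conj_mem m hm g⟩ = χ ⟨m, hm⟩)
    (hperf : ∀ g : K, (∀ h : K, χ ⟨⁅g, h⁆, hcomm g h⟩ = 1) → g ∈ Kplus)
    (KW : Subgroup K) (hKW : Kplus ≤ KW) (hKWn : KW.Normal)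
    (hisot : ∀ g ∈ KW, ∀ h ∈ KW, χ ⟨⁅g, h⁆, hcomm g h⟩ = 1)
    (hlag : (Kplus.subgroupOf KW).index ^ 2 = Kplus.index) :
    ∀ Ext : (↥KW →* kˣ) → Prop,
      (Ext = fun ν => ∀ (g : K) (hg : g ∈ Kplus), ν ⟨g, hKW hg⟩ = χ ⟨g, hg⟩) →
      (∃ ν : ↥KW →* kˣ, Ext ν) ∧
      Nat.card {ν : ↥KW →* kˣ // Ext ν} = (Kplus.subgroupOf KW).index ∧
      (∀ ν ν' : ↥KW →* kˣ, Ext ν → Ext ν' →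
        ∃ g : K, ∀ x : ↥KW, ν' x = ν ⟨g * x * g⁻¹, hKWn.conj_mem x.1 x.2 g⟩) ∧
      (∀ ν : ↥KW →* kˣ, Ext ν → ∀ g : K,
        ((∀ x : ↥KW, ν ⟨g * x * g⁻¹, hKWn.conj_mem x.1 x.2 g⟩ = ν x) ↔ g ∈ KW)) := by
  intro Ext hExt
  subst hExt
  classical
  haveI : Fact p.Prime := ⟨hp⟩
  -- the character as a total function
  set c : K → kˣ := fun g => if h : g ∈ Kplus then χ ⟨g, h⟩ else 1 with hc
  have hceq : ∀ (g : K) (h : g ∈ Kplus), c g = χ ⟨g, h⟩ := by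
    intro g h; simp only [hc]; exact dif_pos h
  have hcmul : ∀ a b : K, a ∈ Kplus → b ∈ Kplus → c (a * b) = c a * c b := by
    intro a b ha hb
    rw [hceq a ha, hceq b hb, hceq _ (mul_mem ha hb)]
    exact map_mul χ ⟨a, ha⟩ ⟨b, hb⟩
  have hcone : c 1 = 1 := by rw [hceq 1 (one_mem _)]; exact map_one χ
  have hcinv : ∀ a : K, a ∈ Kplus → c a⁻¹ = (c a)⁻¹ := by
    intro a ha
    rw [hceq a ha, hceq a⁻¹ (inv_mem ha)]
    exact map_inv χ ⟨a, ha⟩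
  have hcconj : ∀ (g m : K), m ∈ Kplus → c (g * m * g⁻¹) = c m := by
    intro g m hm
    rw [hceq _ (hKpN.conj_mem m hm g), hceq m hm]
    exact hχinv g m hm
  -- basic pairing identities
  have hpair_mul_right : ∀ g a b : K, c ⁅g, a * b⁆ = c ⁅g, a⁆ * c ⁅g, b⁆ := by
    intro g a b
    have hid : ⁅g, a * b⁆ = ⁅g, a⁆ * (a * ⁅g, b⁆ * a⁻¹) := by group
    rw [hid, hcmul _ _ (hcomm g a) (hKpN.conj_mem _ (hcomm g b) a), hcconj a _ (hcomm g b)]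
  have hpair_mul_left : ∀ g h x : K, c ⁅g * h, x⁆ = c ⁅g, x⁆ * c ⁅h, x⁆ := by
    intro g h x
    have hid : ⁅g * h, x⁆ = (g * ⁅h, x⁆ * g⁻¹) * ⁅g, x⁆ := by group
    rw [hid, hcmul _ _ (hKpN.conj_mem _ (hcomm h x) g) (hcomm g x), hcconj g _ (hcomm h x),
      mul_comm]
  have hKp_right : ∀ g : K, ∀ h ∈ Kplus, c ⁅g, h⁆ = 1 := by
    intro g h hh
    have hid : ⁅g, h⁆ = (g * h * g⁻¹) * h⁻¹ := by group
    rw [hid, hcmul _ _ (hKpN.conj_mem _ hh g) (inv_mem hh), hcconj g h hh, hcinv h hh,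
      mul_inv_cancel]
  have hKp_left : ∀ g ∈ Kplus, ∀ h : K, c ⁅g, h⁆ = 1 := by
    intro g hg h
    have hid : ⁅g, h⁆ = g * (h * g⁻¹ * h⁻¹) := by group
    rw [hid, hcmul _ _ hg (hKpN.conj_mem _ (inv_mem hg) h), hcconj h _ (inv_mem hg),
      hcinv g hg, mul_inv_cancel]
  have hW_pair : ∀ g ∈ KW, ∀ x ∈ KW, c ⁅g, x⁆ = 1 := by
    intro g hg x hx; rw [hceq _ (hcomm g x)]; exact hisot g hg x hx
  -- roots of unity
  have hprimK : ∀ n : ℕ, n ∣ Nat.card K → ∃ ζ : k, IsPrimitiveRoot ζ n := by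
    intro n hn
    obtain ⟨r, hr⟩ := IsPGroup.iff_card.mp hK
    rw [hr] at hn
    obtain ⟨m, hm, rfl⟩ := (Nat.dvd_prime_pow hp).mp hn
    exact hroots m (by rw [hr]; exact pow_dvd_pow p hm)
  -- subgroups and quotients
  set P : Subgroup ↥KW := Kplus.subgroupOf KW with hPdef
  haveI hPN : P.Normal := hKpN.comap KW.subtype
  have hPcomm : ∀ a b : ↥KW, ⁅a, b⁆ ∈ P := by
    intro a b
    rw [hPdef, Subgroup.mem_subgroupOf]
    exact hcomm _ _
  letI : CommGroup (↥KW ⧸ P) :=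
    { (inferInstance : Group (↥KW ⧸ P)) with mul_comm := auxMulComm P hPcomm }
  letI : CommGroup (K ⧸ Kplus) :=
    { (inferInstance : Group (K ⧸ Kplus)) with mul_comm := auxMulComm Kplus hcomm }
  have hKWcomm : ∀ a b : K, ⁅a, b⁆ ∈ KW := fun a b => hKW (hcomm a b)
  letI : CommGroup (K ⧸ KW) :=
    { (inferInstance : Group (K ⧸ KW)) with mul_comm := auxMulComm KW hKWcomm }
  have hdvd_quot : ∀ N : Subgroup K, Nat.card (K ⧸ N) ∣ Nat.card K := fun N =>
    Dvd.intro _ (Subgroup.card_eq_card_quotient_mul_card_subgroup N).symm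
  obtain ⟨eV⟩ := auxDual (k := k) (G := K ⧸ Kplus)
    (fun n hn => hprimK n (hn.trans (hdvd_quot Kplus)))
  obtain ⟨eW⟩ := auxDual (k := k) (G := K ⧸ KW)
    (fun n hn => hprimK n (hn.trans (hdvd_quot KW)))
  have hdvdKW : Nat.card ↥KW ∣ Nat.card K := Subgroup.card_subgroup_dvd_card KW
  have hdvdQ : Nat.card (↥KW ⧸ P) ∣ Nat.card K :=
    (Dvd.intro _ (Subgroup.card_eq_card_quotient_mul_card_subgroup P).symm).trans hdvdKW
  obtain ⟨eQ⟩ := auxDual (k := k) (G := ↥KW ⧸ P) (fun n hn => hprimK n (hn.trans hdvdQ))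
  haveI : Finite ((K ⧸ Kplus) →* kˣ) := Finite.of_equiv _ eV.toEquiv.symm
  haveI : Finite ((K ⧸ KW) →* kˣ) := Finite.of_equiv _ eW.toEquiv.symm
  haveI : Finite ((↥KW ⧸ P) →* kˣ) := Finite.of_equiv _ eQ.toEquiv.symm
  haveI : Finite ↥(trivOn Kplus kˣ) := Finite.of_equiv _ (trivOnEquiv Kplus kˣ).symm
  haveI : Finite ↥(trivOn KW kˣ) := Finite.of_equiv _ (trivOnEquiv KW kˣ).symm
  haveI : Finite ↥(trivOn P kˣ) := Finite.of_equiv _ (trivOnEquiv P kˣ).symm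
  -- index arithmetic
  have hPindex_ne : P.index ≠ 0 := Subgroup.index_ne_zero_of_finite
  have hrel : P.index * KW.index = Kplus.index := Subgroup.relIndex_mul_index hKW
  have hKWindex : KW.index = P.index := by
    have h2 : P.index * KW.index = P.index * P.index := by
      rw [hrel, ← hlag]; ring
    exact Nat.eq_of_mul_eq_mul_left (Nat.pos_of_ne_zero hPindex_ne) h2
  have hcardP : Nat.card ↥P = Nat.card ↥Kplus :=
    Nat.card_congr (Subgroup.subgroupOfEquivOfLe hKW).toEquiv
  have hcardKW : P.index * Nat.card ↥P = Nat.card ↥KW := Subgroup.index_mul_card P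
  have hcardK : Kplus.index * Nat.card ↥Kplus = Nat.card K := Subgroup.index_mul_card Kplus
  -- the pairing homomorphisms
  let β : K →* (K →* kˣ) := MonoidHom.mk'
    (fun g => MonoidHom.mk' (fun x => c ⁅g, x⁆) (fun x y => hpair_mul_right g x y))
    (fun g h => MonoidHom.ext fun x => hpair_mul_left g h x)
  let τ : K →* (↥KW →* kˣ) := MonoidHom.mk'
    (fun g => MonoidHom.mk' (fun x : ↥KW => c ⁅g, (x : K)⁆)
      (fun x y => hpair_mul_right g ↑x ↑y))
    (fun g h => MonoidHom.ext fun x => hpair_mul_left g h ↑x)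
  have hkerβ : β.ker = Kplus := by
    ext g
    simp only [MonoidHom.mem_ker]
    constructor
    · intro h1
      refine hperf g fun h => ?_
      rw [← hceq _ (hcomm g h)]
      exact DFunLike.congr_fun h1 h
    · intro hg
      exact MonoidHom.ext fun h => hKp_left g hg h
  have hrangeβ : β.range = trivOn Kplus kˣ := by
    have hle : β.range ≤ trivOn Kplus kˣ := by
      rintro φ ⟨g, rfl⟩
      exact fun x hx => hKp_right g x hx
    refine auxEqOfLe hle ?_
    have h1 : Nat.card K = Nat.card ↥β.range * Nat.card ↥Kplus := by
      have h := Subgroup.card_eq_card_quotient_mul_card_subgroup β.ker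
      rwa [Nat.card_congr (QuotientGroup.quotientKerEquivRange β).toEquiv, hkerβ] at h
    have h2 : Nat.card ↥(trivOn Kplus kˣ) = Kplus.index := by
      rw [Nat.card_congr (trivOnEquiv Kplus kˣ), Nat.card_congr eV.toEquiv,
        ← Subgroup.index_eq_card]
    have hKpcard_pos : 0 < Nat.card ↥Kplus := Nat.card_pos
    have h3 : Nat.card ↥β.range = Kplus.index := by
      refine Nat.eq_of_mul_eq_mul_right hKpcard_pos ?_
      rw [← h1, hcardK]
    rw [h2, h3]
  -- the kernel of τ is KW
  have hτβ : ∀ g : K, τ g = 1 ↔ β g ∈ trivOn KW kˣ := by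
    intro g
    constructor
    · intro h1 x hx
      exact DFunLike.congr_fun h1 (⟨x, hx⟩ : ↥KW)
    · intro h1
      exact MonoidHom.ext fun x => h1 ↑x x.2
  have hAWle : trivOn KW kˣ ≤ trivOn Kplus kˣ := fun φ hφ x hx => hφ x (hKW hx)
  have hKWle_S : KW ≤ τ.ker := fun g hg =>
    MonoidHom.mem_ker.mpr (MonoidHom.ext fun x => hW_pair g hg ↑x x.2)
  let β' : ↥τ.ker →* ↥(trivOn KW kˣ) :=
    (β.comp τ.ker.subtype).codRestrict (trivOn KW kˣ)
      (fun x => (hτβ ↑x).mp (MonoidHom.mem_ker.mp x.2))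
  have hβ'surj : Function.Surjective β' := by
    rintro ⟨φ, hφ⟩
    have hmem : φ ∈ β.range := hrangeβ ▸ hAWle hφ
    obtain ⟨g, hg⟩ := hmem
    refine ⟨⟨g, MonoidHom.mem_ker.mpr ((hτβ g).mpr (hg ▸ hφ))⟩, Subtype.ext hg⟩
  have hKpS : Kplus ≤ τ.ker := hKW.trans hKWle_S
  have hkerβ' : β'.ker = Kplus.subgroupOf τ.ker := by
    ext x
    simp only [MonoidHom.mem_ker, Subgroup.mem_subgroupOf]
    constructor
    · intro h1
      have h2 : β ↑x = 1 := Subtype.ext_iff.mp h1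
      rw [← hkerβ]
      exact MonoidHom.mem_ker.mpr h2
    · intro h1
      apply Subtype.ext
      show β ↑x = 1
      rw [← MonoidHom.mem_ker, hkerβ]
      exact h1
  have hcardkerβ' : Nat.card ↥β'.ker = Nat.card ↥Kplus := by
    rw [hkerβ']
    exact Nat.card_congr (Subgroup.subgroupOfEquivOfLe hKpS).toEquiv
  have hcardAW : Nat.card ↥(trivOn KW kˣ) = KW.index := by
    rw [Nat.card_congr (trivOnEquiv KW kˣ), Nat.card_congr eW.toEquiv,
      ← Subgroup.index_eq_card]
  have hScard : Nat.card ↥τ.ker = Nat.card ↥KW := by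
    have h := Subgroup.card_eq_card_quotient_mul_card_subgroup β'.ker
    rw [Nat.card_congr (QuotientGroup.quotientKerEquivOfSurjective β' hβ'surj).toEquiv] at h
    rw [h, hcardkerβ', hcardAW, hKWindex, ← hcardKW, hcardP]
  have hSKW : τ.ker = KW := (auxEqOfLe hKWle_S hScard.le).symm
  have hstab : ∀ g : K, (∀ x : ↥KW, c ⁅g, (x : K)⁆ = 1) ↔ g ∈ KW := by
    intro g
    constructor
    · intro h1
      rw [← hSKW]
      exact MonoidHom.mem_ker.mpr (MonoidHom.ext fun x => h1 x)
    · intro hg x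
      exact hW_pair g hg ↑x x.2
  -- the range of τ
  have hcardDext : Nat.card ↥(trivOn P kˣ) = P.index := by
    rw [Nat.card_congr (trivOnEquiv P kˣ), Nat.card_congr eQ.toEquiv,
      ← Subgroup.index_eq_card]
  have hrangeτ : τ.range = trivOn P kˣ := by
    have hle : τ.range ≤ trivOn P kˣ := by
      rintro φ ⟨g, rfl⟩ x hx
      exact hKp_right g ↑x (Subgroup.mem_subgroupOf.mp hx)
    refine auxEqOfLe hle ?_
    have h1 : Nat.card K = Nat.card ↥τ.range * Nat.card ↥KW := by
      have h := Subgroup.card_eq_card_quotient_mul_card_subgroup τ.ker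
      rwa [Nat.card_congr (QuotientGroup.quotientKerEquivRange τ).toEquiv, hScard] at h
    have h3 : KW.index * Nat.card ↥KW = Nat.card K := Subgroup.index_mul_card KW
    have hKWcard_pos : 0 < Nat.card ↥KW := Nat.card_pos
    have h4 : Nat.card ↥τ.range = KW.index := by
      refine Nat.eq_of_mul_eq_mul_right hKWcard_pos ?_
      rw [← h1, h3]
    rw [hcardDext, h4, hKWindex]
  -- the conjugation relation
  have hmemKW : ∀ (g : K) (x : ↥KW), ⁅g, (x : K)⁆ ∈ KW := fun g x => hKW (hcomm g ↑x)
  have hconj : ∀ ν : ↥KW →* kˣ,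
      (∀ (g : K) (hg : g ∈ Kplus), ν ⟨g, hKW hg⟩ = χ ⟨g, hg⟩) →
      ∀ (g : K) (x : ↥KW),
        ν ⟨g * ↑x * g⁻¹, hKWn.conj_mem ↑x x.2 g⟩ = c ⁅g, (x : K)⁆ * ν x := by
    intro ν hν g x
    have hsplit : (⟨g * ↑x * g⁻¹, hKWn.conj_mem ↑x x.2 g⟩ : ↥KW)
        = ⟨⁅g, (x : K)⁆, hmemKW g x⟩ * x := by
      ext
      show g * ↑x * g⁻¹ = ⁅g, (x : K)⁆ * ↑x
      group
    rw [hsplit, map_mul]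
    congr 1
    exact (hν ⁅g, (x : K)⁆ (hcomm g ↑x)).trans (hceq _ (hcomm g ↑x)).symm
  -- existence of an extension
  let ψP : ↥P →* kˣ := MonoidHom.mk' (fun x : ↥P => c ((x : ↥KW) : K))
    (fun x y => hcmul _ _ (Subgroup.mem_subgroupOf.mp x.2) (Subgroup.mem_subgroupOf.mp y.2))
  have hcommutator_triv : ∀ y : ↥KW, y ∈ commutator ↥KW →
      c ((y : K)) = 1 ∧ (y : K) ∈ Kplus := by
    intro y hy
    rw [commutator_eq_closure] at hy
    refine Subgroup.closure_induction
      (p := fun (z : ↥KW) _ => c ((z : K)) = 1 ∧ (z : K) ∈ Kplus) ?_ ?_ ?_ ?_ hy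
    · rintro z ⟨a, b, rfl⟩
      exact ⟨hW_pair ↑a a.2 ↑b b.2, hcomm _ _⟩
    · exact ⟨hcone, one_mem _⟩
    · rintro u v hu hv ⟨hcu, hmu⟩ ⟨hcv, hmv⟩
      refine ⟨?_, mul_mem hmu hmv⟩
      rw [show ((u * v : ↥KW) : K) = ↑u * ↑v from rfl, hcmul _ _ hmu hmv, hcu, hcv, one_mul]
    · rintro u hu ⟨hcu, hmu⟩
      refine ⟨?_, inv_mem hmu⟩
      rw [show ((u⁻¹ : ↥KW) : K) = (↑u)⁻¹ from rfl, hcinv _ hmu, hcu, inv_one]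
  let fP : ↥P →* Abelianization ↥KW := (Abelianization.of).comp P.subtype
  have hkerfP : fP.ker ≤ ψP.ker := by
    intro x hx
    have h1 : Abelianization.of ((x : ↥KW)) = 1 := hx
    have h2 : ((x : ↥KW)) ∈ commutator ↥KW := (QuotientGroup.eq_one_iff _).mp h1
    exact (hcommutator_triv _ h2).1
  obtain ⟨ψ', hψ'⟩ := auxDescend fP ψP hkerfP
  have hdvdAb : Nat.card (Abelianization ↥KW) ∣ Nat.card K := by
    have h1 : Nat.card (Abelianization ↥KW) ∣ Nat.card ↥KW :=
      Dvd.intro _ (Subgroup.card_eq_card_quotient_mul_card_subgroup (commutator ↥KW)).symm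
    exact h1.trans hdvdKW
  obtain ⟨Φ, hΦ⟩ := auxExt (G := Abelianization ↥KW)
    (fun n hn => hprimK n (hn.trans hdvdAb)) fP.range ψ'
  set ν₀ : ↥KW →* kˣ := Φ.comp Abelianization.of with hν₀def
  have hν₀ : ∀ (g : K) (hg : g ∈ Kplus), ν₀ ⟨g, hKW hg⟩ = χ ⟨g, hg⟩ := by
    intro g hg
    have hx : (⟨g, hKW hg⟩ : ↥KW) ∈ P := Subgroup.mem_subgroupOf.mpr hg
    have h1 : ν₀ ⟨g, hKW hg⟩ = Φ (fP ⟨⟨g, hKW hg⟩, hx⟩) := rfl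
    have h2 : Φ (fP ⟨⟨g, hKW hg⟩, hx⟩)
        = ψ' ⟨fP ⟨⟨g, hKW hg⟩, hx⟩, MonoidHom.mem_range.mpr ⟨_, rfl⟩⟩ :=
      hΦ ⟨fP ⟨⟨g, hKW hg⟩, hx⟩, MonoidHom.mem_range.mpr ⟨_, rfl⟩⟩
    rw [h1, h2, hψ' ⟨⟨g, hKW hg⟩, hx⟩]
    show c g = χ ⟨g, hg⟩
    exact hceq g hg
  -- a membership criterion for differences of extensions
  have hdiff : ∀ ν ν' : ↥KW →* kˣ,
      (∀ (g : K) (hg : g ∈ Kplus), ν ⟨g, hKW hg⟩ = χ ⟨g, hg⟩) →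
      (∀ (g : K) (hg : g ∈ Kplus), ν' ⟨g, hKW hg⟩ = χ ⟨g, hg⟩) →
      ν' * ν⁻¹ ∈ trivOn P kˣ := by
    intro ν ν' hν hν' x hx
    have hm : (x : K) ∈ Kplus := Subgroup.mem_subgroupOf.mp hx
    have h1 : ν x = χ ⟨↑x, hm⟩ := hν ↑x hm
    have h2 : ν' x = χ ⟨↑x, hm⟩ := hν' ↑x hm
    show ν' x * (ν x)⁻¹ = 1
    rw [h1, h2, mul_inv_cancel]
  refine ⟨⟨ν₀, hν₀⟩, ?_, ?_, ?_⟩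
  · -- cardinality of the set of extensions
    have hEquiv : {ν : ↥KW →* kˣ //
        ∀ (g : K) (hg : g ∈ Kplus), ν ⟨g, hKW hg⟩ = χ ⟨g, hg⟩} ≃ ↥(trivOn P kˣ) :=
      { toFun := fun ν => ⟨ν.1 * ν₀⁻¹, hdiff ν₀ ν.1 hν₀ ν.2⟩
        invFun := fun δ => ⟨ν₀ * δ.1, by
          intro g hg
          have hδ := δ.2 ⟨g, hKW hg⟩ (Subgroup.mem_subgroupOf.mpr hg)
          show ν₀ ⟨g, hKW hg⟩ * δ.1 ⟨g, hKW hg⟩ = χ ⟨g, hg⟩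
          rw [hδ, mul_one, hν₀ g hg]⟩
        left_inv := fun ν => Subtype.ext (MonoidHom.ext fun x => by
          show ν₀ x * (ν.1 x * (ν₀ x)⁻¹) = ν.1 x
          rw [mul_comm (ν.1 x) ((ν₀ x)⁻¹), ← mul_assoc, mul_inv_cancel, one_mul])
        right_inv := fun δ => Subtype.ext (MonoidHom.ext fun x => by
          show (ν₀ x * δ.1 x) * (ν₀ x)⁻¹ = δ.1 x
          rw [mul_comm (ν₀ x) (δ.1 x), mul_assoc, mul_inv_cancel, mul_one]) }
    rw [Nat.card_congr hEquiv, hcardDext]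
  · -- transitivity
    intro ν ν' hν hν'
    have hδ : ν' * ν⁻¹ ∈ trivOn P kˣ := hdiff ν ν' hν hν'
    rw [← hrangeτ] at hδ
    obtain ⟨g, hg⟩ := hδ
    refine ⟨g, fun x => ?_⟩
    have h3 := hconj ν hν g x
    have h4 : c ⁅g, (x : K)⁆ = ν' x * (ν x)⁻¹ := DFunLike.congr_fun hg x
    rw [h3, h4, mul_assoc, inv_mul_cancel, mul_one]
  · -- stabilizers
    intro ν hν g
    constructor
    · intro h1
      refine (hstab g).mp fun x => ?_
      have h2 := hconj ν hν g x
      have h3 := h1 x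
      have h4 : ν x = c ⁅g, (x : K)⁆ * ν x := by rw [← h2, h3]
      exact (right_eq_mul.mp h4)
    · intro hg x
      rw [hconj ν hν g x, (hstab g).mpr hg x, one_mul]
end

section
/- Let G be a finite group, N a normal subgroup, k a field with char k ∤ |G| containing enough roots of unity, and χ : N → k^× a character. If the stabilizer of χ under the conjugation action of G equals N (i.e. for every g ∈ G ∖ N there exists n ∈ N with χ(gng⁻¹) ≠ χ(n)), then End_{kG}(Ind_N^G χ) ≅ k; in particular, if k is algebraically closed, the induced representation Ind_N^G χ is irreducible. -/
/-- The function-space model of the induced representation `Ind_N^G χ`: functions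
`f : G → k` with `f (n * x) = χ n * f x` for `n ∈ N`; the group `G` acts by right
translation. -/
def indSpace {G : Type*} [Group G] {k : Type*} [Field k] (N : Subgroup G)
    (χ : ↥N →* kˣ) : Submodule k (G → k) where
  carrier := {f | ∀ (g : G) (hg : g ∈ N) (x : G), f (g * x) = (χ ⟨g, hg⟩ : k) * f x}
  add_mem' := by
    intro f₁ f₂ h₁ h₂
    intro g hg x
    simp only [Pi.add_apply, h₁ g hg x, h₂ g hg x, mul_add]
  zero_mem' := by
    intro g hg x
    simp
  smul_mem' := by
    intro c f hf
    intro g hg x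
    simp only [Pi.smul_apply, smul_eq_mul, hf g hg x]
    ring

/-- A linear map between right-translation stable function spaces is equivariant if it
intertwines the right translation actions. -/
def IsTranslationEquivariant {G : Type*} [Group G] {k : Type*} [Field k]
    (U V : Submodule k (G → k)) (Φ : ↥U →ₗ[k] ↥V) : Prop :=
  ∀ (g : G) (f f' : ↥U), ((f' : G → k) = fun x => (f : G → k) (x * g)) →
    ((Φ f' : G → k) = fun x => (Φ f : G → k) (x * g))


section aux


variable {G : Type*} [Group G] {k : Type*} [Field k] (N : Subgroup G) (χ : ↥N →* kˣ)

def Rmap (g : G) : ↥(indSpace N χ) →ₗ[k] ↥(indSpace N χ) where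
  toFun f := ⟨fun x => (f : G → k) (x * g), by
    intro n hn x
    have := f.2 n hn (x * g)
    simpa [mul_assoc] using this⟩
  map_add' f₁ f₂ := rfl
  map_smul' c f := rfl

@[simp] lemma Rmap_apply (g : G) (f : ↥(indSpace N χ)) (x : G) :
    (Rmap N χ g f : G → k) x = (f : G → k) (x * g) := rfl

lemma Rmap_mul (g h : G) (f : ↥(indSpace N χ)) :
    Rmap N χ g (Rmap N χ h f) = Rmap N χ (g * h) f := by
  refine Subtype.ext (funext fun x => ?_)
  simp [mul_assoc]

open Classical in
noncomputable def eFun (x : G) : ↥(indSpace N χ) :=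
  ⟨fun y => if h : y * x⁻¹ ∈ N then (χ ⟨y * x⁻¹, h⟩ : k) else 0, by
    intro n hn y
    have hiff : n * y * x⁻¹ ∈ N ↔ y * x⁻¹ ∈ N := by
      rw [mul_assoc]
      constructor
      · intro h
        have := N.mul_mem (N.inv_mem hn) h
        simpa [← mul_assoc] using this
      · intro h; exact N.mul_mem hn h
    dsimp only
    by_cases h : y * x⁻¹ ∈ N
    · have h' : n * y * x⁻¹ ∈ N := hiff.mpr h
      rw [dif_pos h', dif_pos h]
      have hsub : (⟨n * y * x⁻¹, h'⟩ : ↥N) = ⟨n, hn⟩ * ⟨y * x⁻¹, h⟩ :=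
        Subtype.ext (by simp [mul_assoc])
      rw [hsub, map_mul, Units.val_mul]
    · rw [dif_neg h, dif_neg (fun h' => h (hiff.mp h')), mul_zero]⟩

open Classical in
lemma eFun_apply (x y : G) :
    (eFun N χ x : G → k) y = if h : y * x⁻¹ ∈ N then (χ ⟨y * x⁻¹, h⟩ : k) else 0 := rfl

lemma eFun_one_one : (eFun N χ 1 : G → k) 1 = 1 := by
  have h : (1 : G) * 1⁻¹ ∈ N := by simpa using N.one_mem
  rw [eFun_apply, dif_pos h]
  have : (⟨(1 : G) * 1⁻¹, h⟩ : ↥N) = 1 := Subtype.ext (by simp)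
  rw [this, map_one, Units.val_one]

lemma eFun_left (n : ↥N) (x : G) :
    eFun N χ ((n : G) * x) = (((χ n)⁻¹ : kˣ) : k) • eFun N χ x := by
  refine Subtype.ext (funext fun y => ?_)
  have hrw : y * ((n : G) * x)⁻¹ = y * x⁻¹ * (n : G)⁻¹ := by group
  have hiff : y * x⁻¹ * (n : G)⁻¹ ∈ N ↔ y * x⁻¹ ∈ N := by
    constructor
    · intro h
      have := N.mul_mem h n.2
      simpa [mul_assoc] using this
    · intro h; exact N.mul_mem h (N.inv_mem n.2)
  show (eFun N χ ((n : G) * x) : G → k) y = (((χ n)⁻¹ : kˣ) : k) • (eFun N χ x : G → k) y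
  rw [eFun_apply, eFun_apply]
  by_cases h : y * x⁻¹ ∈ N
  · have h' : y * ((n : G) * x)⁻¹ ∈ N := by rw [hrw]; exact hiff.mpr h
    rw [dif_pos h', dif_pos h]
    have hsub : (⟨y * ((n : G) * x)⁻¹, h'⟩ : ↥N) = ⟨y * x⁻¹, h⟩ * n⁻¹ :=
      Subtype.ext (by push_cast; rw [hrw])
    rw [hsub, map_mul, map_inv, Units.val_mul, smul_eq_mul]
    ring
  · have h' : ¬ (y * ((n : G) * x)⁻¹ ∈ N) := by rw [hrw]; exact fun hh => h (hiff.mp hh)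
    rw [dif_neg h', dif_neg h, smul_zero]

lemma Rmap_eFun (n : ↥N) (x : G) :
    Rmap N χ (n : G) (eFun N χ x) = eFun N χ (x * (n : G)⁻¹) := by
  refine Subtype.ext (funext fun y => ?_)
  show (eFun N χ x : G → k) (y * (n : G)) = (eFun N χ (x * (n : G)⁻¹) : G → k) y
  rw [eFun_apply, eFun_apply]
  have hrw : y * (x * (n : G)⁻¹)⁻¹ = y * (n : G) * x⁻¹ := by group
  rw [hrw]

lemma sum_eFun [Fintype G] (f : ↥(indSpace N χ)) (y : G) :
    ∑ x : G, (f : G → k) x * (eFun N χ x : G → k) y = (Nat.card ↥N : k) * (f : G → k) y := by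
  classical
  rw [← Equiv.sum_comp (Equiv.mulRight y)
    (fun x => (f : G → k) x * (eFun N χ x : G → k) y)]
  have key : ∀ x : G, (f : G → k) (x * y) * (eFun N χ (x * y) : G → k) y
      = if x ∈ N then (f : G → k) y else 0 := by
    intro x
    rw [eFun_apply]
    have hrw : y * (x * y)⁻¹ = x⁻¹ := by group
    by_cases hx : x ∈ N
    · have hmem : y * (x * y)⁻¹ ∈ N := by rw [hrw]; exact N.inv_mem hx
      rw [dif_pos hmem, if_pos hx]
      have h1 : (f : G → k) (x * y) = (χ ⟨x, hx⟩ : k) * (f : G → k) y := f.2 x hx y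
      have h2 : (⟨y * (x * y)⁻¹, hmem⟩ : ↥N) = (⟨x, hx⟩ : ↥N)⁻¹ :=
        Subtype.ext (by push_cast; rw [hrw])
      rw [h1, h2, map_inv, Units.val_inv_eq_inv_val]
      have hχ : (χ ⟨x, hx⟩ : k) ≠ 0 := Units.ne_zero _
      field_simp
    · have hmem : ¬ (y * (x * y)⁻¹ ∈ N) := by
        rw [hrw]; exact fun hh => hx (by simpa using N.inv_mem hh)
      rw [dif_neg hmem, if_neg hx, mul_zero]
  simp only [Equiv.coe_mulRight]
  rw [Finset.sum_congr rfl (fun x _ => key x), ← Finset.sum_filter, Finset.sum_const]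
  have hcard : (Finset.univ.filter (fun x : G => x ∈ N)).card = Nat.card ↥N := by
    rw [Nat.card_eq_fintype_card, Fintype.card_subtype]
  rw [hcard, nsmul_eq_mul]

end aux


section endo

variable {G : Type*} [Group G] {k : Type*} [Field k] (N : Subgroup G) (χ : ↥N →* kˣ)

lemma endo_scalar [Finite G] [hN : N.Normal]
    (hNc : (Nat.card ↥N : k) ≠ 0)
    (hstab : ∀ g : G, g ∉ N →
      ∃ m : ↥N, χ ⟨g * (m : G) * g⁻¹, hN.conj_mem (m : G) m.2 g⟩ ≠ χ m)
    (Φ : ↥(indSpace N χ) →ₗ[k] ↥(indSpace N χ))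
    (hΦ : IsTranslationEquivariant (indSpace N χ) (indSpace N χ) Φ) :
    ∃! c : k, ∀ f : ↥(indSpace N χ), Φ f = c • f := by
  classical
  have _inst := Fintype.ofFinite G
  have hEq : ∀ (g : G) (f : ↥(indSpace N χ)), Φ (Rmap N χ g f) = Rmap N χ g (Φ f) :=
    fun g f => Subtype.ext (hΦ g f (Rmap N χ g f) rfl)
  set ℓ : G → k := fun x => (Φ (eFun N χ x) : G → k) 1 with hℓdef
  have hℓa : ∀ (n : ↥N) (x : G), ℓ (x * (n : G)⁻¹) = (χ n : k) * ℓ x := by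
    intro n x
    have h1 : Φ (eFun N χ (x * (n : G)⁻¹)) = Rmap N χ (n : G) (Φ (eFun N χ x)) := by
      rw [← Rmap_eFun, hEq]
    have h3 : (Φ (eFun N χ x) : G → k) ((n : G)) = (χ n : k) * (Φ (eFun N χ x) : G → k) 1 := by
      have := (Φ (eFun N χ x)).2 (n : G) n.2 1
      simpa using this
    show (Φ (eFun N χ (x * (n : G)⁻¹)) : G → k) 1 = (χ n : k) * (Φ (eFun N χ x) : G → k) 1
    rw [h1]
    have h2 : (Rmap N χ (n : G) (Φ (eFun N χ x)) : G → k) 1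
        = (Φ (eFun N χ x) : G → k) ((n : G)) := by
      rw [Rmap_apply, one_mul]
    rw [h2, h3]
  have hℓb : ∀ (n : ↥N) (x : G), ℓ ((n : G) * x) = (((χ n)⁻¹ : kˣ) : k) * ℓ x := by
    intro n x
    show (Φ (eFun N χ ((n : G) * x)) : G → k) 1 = _
    rw [eFun_left, map_smul]
    simp only [Submodule.coe_smul, Pi.smul_apply, smul_eq_mul]
    rfl
  have hℓ0 : ∀ x : G, x ∉ N → ℓ x = 0 := by
    intro x hx
    obtain ⟨m, hm⟩ := hstab x hx
    set n : ↥N := ⟨x * (m : G) * x⁻¹, hN.conj_mem (m : G) m.2 x⟩ with hndef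
    have hx' : (n : G) * (x * (m : G)⁻¹) = x := by
      show (x * (m : G) * x⁻¹) * (x * (m : G)⁻¹) = x
      group
    have e1 : ℓ x = (((χ n)⁻¹ : kˣ) : k) * ℓ (x * (m : G)⁻¹) := by
      conv_lhs => rw [← hx']
      rw [hℓb]
    have e2 : ℓ (x * (m : G)⁻¹) = (χ m : k) * ℓ x := hℓa m x
    by_contra h0
    have h' : ((((χ n)⁻¹ : kˣ) : k) * (χ m : k)) * ℓ x = 1 * ℓ x := by
      rw [one_mul, mul_assoc, ← e2, ← e1]
    have hval : (((χ n)⁻¹ : kˣ) : k) * (χ m : k) = 1 := mul_right_cancel₀ h0 h'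
    have ha : ((χ n)⁻¹ * χ m : kˣ) = 1 := Units.ext (by simpa using hval)
    rw [inv_mul_eq_one] at ha
    exact hm ha
  have hdecomp : ∀ f : ↥(indSpace N χ),
      (Nat.card ↥N : k) • f = ∑ x : G, (f : G → k) x • eFun N χ x := by
    intro f
    refine Subtype.ext (funext fun y => ?_)
    have hs := sum_eFun N χ f y
    calc ((Nat.card ↥N : k) • f : ↥(indSpace N χ)).1 y
        = (Nat.card ↥N : k) * (f : G → k) y := rfl
      _ = ∑ x : G, (f : G → k) x * (eFun N χ x : G → k) y := hs.symm
      _ = ((∑ x : G, (f : G → k) x • eFun N χ x : ↥(indSpace N χ)) : G → k) y := by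
          simp only [AddSubmonoidClass.coe_finset_sum, Finset.sum_apply,
            Submodule.coe_smul, Pi.smul_apply, smul_eq_mul]
  have key2 : ∀ f : ↥(indSpace N χ), (Φ f : G → k) 1 = ℓ 1 * (f : G → k) 1 := by
    intro f
    have h1' : (Nat.card ↥N : k) • Φ f = ∑ x : G, (f : G → k) x • Φ (eFun N χ x) := by
      rw [← map_smul, hdecomp f, map_sum]
      simp only [map_smul]
    have h1 : (Nat.card ↥N : k) * (Φ f : G → k) 1 = ∑ x : G, (f : G → k) x * ℓ x := by
      have h := congrArg (fun u : ↥(indSpace N χ) => (u : G → k) 1) h1'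
      simpa only [Submodule.coe_smul, Pi.smul_apply, smul_eq_mul,
        AddSubmonoidClass.coe_finset_sum, Finset.sum_apply] using h
    have h2 : ∑ x : G, (f : G → k) x * ℓ x
        = (Nat.card ↥N : k) * (ℓ 1 * (f : G → k) 1) := by
      have hterm : ∀ x : G, (f : G → k) x * ℓ x
          = if x ∈ N then ℓ 1 * (f : G → k) 1 else 0 := by
        intro x
        by_cases hx : x ∈ N
        · rw [if_pos hx]
          have hfx : (f : G → k) x = (χ ⟨x, hx⟩ : k) * (f : G → k) 1 := by
            simpa using f.2 x hx 1
          have hlx : ℓ x = (((χ ⟨x, hx⟩)⁻¹ : kˣ) : k) * ℓ 1 := by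
            simpa using hℓb ⟨x, hx⟩ 1
          rw [hfx, hlx, Units.val_inv_eq_inv_val]
          have hχ : (χ ⟨x, hx⟩ : k) ≠ 0 := Units.ne_zero _
          field_simp
        · rw [if_neg hx, hℓ0 x hx, mul_zero]
      rw [Finset.sum_congr rfl (fun x _ => hterm x), ← Finset.sum_filter, Finset.sum_const]
      have hcard : (Finset.univ.filter (fun x : G => x ∈ N)).card = Nat.card ↥N := by
        rw [Nat.card_eq_fintype_card, Fintype.card_subtype]
      rw [hcard, nsmul_eq_mul]
    exact mul_left_cancel₀ hNc (h1.trans h2)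
  have key : ∀ f : ↥(indSpace N χ), Φ f = ℓ 1 • f := by
    intro f
    refine Subtype.ext (funext fun x => ?_)
    have h1 : (Φ f : G → k) x = (Φ (Rmap N χ x f) : G → k) 1 := by
      rw [hEq, Rmap_apply, one_mul]
    show (Φ f : G → k) x = (ℓ 1 • f : ↥(indSpace N χ)).1 x
    rw [h1, key2]
    show ℓ 1 * (Rmap N χ x f : G → k) 1 = ℓ 1 * (f : G → k) x
    rw [Rmap_apply, one_mul]
  refine ⟨ℓ 1, key, ?_⟩
  intro c' hc'
  have h3 : c' • eFun N χ 1 = ℓ 1 • eFun N χ 1 := by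
    rw [← hc' (eFun N χ 1), key (eFun N χ 1)]
  have h4 := congrArg (fun u : ↥(indSpace N χ) => (u : G → k) 1) h3
  simp only [Submodule.coe_smul, Pi.smul_apply, smul_eq_mul] at h4
  rwa [eFun_one_one, mul_one, mul_one] at h4


end endo

/-- If the stabilizer of the character `χ` of `N ⊴ G` under `G`-conjugation equals `N`,
then `End_{kG}(Ind_N^G χ) ≅ k`: every `G`-equivariant endomorphism of the induced
representation is a unique scalar; in particular over an algebraically closed field the
induced representation is irreducible. -/
theorem stmt12 {G : Type*} [Group G] [Finite G] {k : Type*} [Field k]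
    (hchar : ¬ ringChar k ∣ Nat.card G)
    (hroots : ∀ m : ℕ, m ∣ Nat.card G → ∃ ζ : k, IsPrimitiveRoot ζ m)
    (N : Subgroup G) [hN : N.Normal] (χ : ↥N →* kˣ)
    (hstab : ∀ g : G, g ∉ N →
      ∃ m : ↥N, χ ⟨g * (m : G) * g⁻¹, hN.conj_mem (m : G) m.2 g⟩ ≠ χ m) :
    (∀ Φ : ↥(indSpace N χ) →ₗ[k] ↥(indSpace N χ),
      IsTranslationEquivariant (indSpace N χ) (indSpace N χ) Φ →
      ∃! c : k, ∀ f : ↥(indSpace N χ), Φ f = c • f) ∧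
    (IsAlgClosed k →
      ∀ U : Submodule k (G → k), U ≤ indSpace N χ →
        (∀ g : G, ∀ f ∈ U, (fun x => f (x * g)) ∈ U) →
        U = ⊥ ∨ U = indSpace N χ) := by
  classical
  have _inst := Fintype.ofFinite G
  have hcardG : (Nat.card G : k) ≠ 0 := fun h => hchar ((ringChar.spec k _).mp h)
  have hcardN : (Nat.card ↥N : k) ≠ 0 := by
    intro h
    exact hchar (((ringChar.spec k _).mp h).trans (Subgroup.card_subgroup_dvd_card N))
  constructor
  · exact fun Φ hΦ => endo_scalar N χ hcardN hstab Φ hΦ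
  · intro _ U hUle hUst
    by_cases hU0 : U = ⊥
    · exact Or.inl hU0
    right
    set U' : Submodule k ↥(indSpace N χ) := U.comap (indSpace N χ).subtype with hU'def
    obtain ⟨W, hW⟩ := Submodule.exists_isCompl U'
    set p : ↥(indSpace N χ) →ₗ[k] ↥(indSpace N χ) :=
      U'.subtype ∘ₗ (U'.projectionOnto W hW) with hpdef
    have hp_mem : ∀ v, p v ∈ U' := fun v => (U'.projectionOnto W hW v).2
    have hp_fix : ∀ v ∈ U', p v = v := by
      intro v hv
      have := Submodule.linearProjOfIsCompl_apply_left hW (⟨v, hv⟩ : ↥U')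
      show U'.subtype (U'.projectionOnto W hW v) = v
      rw [show (v : ↥(indSpace N χ)) = ((⟨v, hv⟩ : ↥U') : ↥(indSpace N χ)) from rfl, this]
      rfl
    set Φ₀ : ↥(indSpace N χ) →ₗ[k] ↥(indSpace N χ) :=
      ∑ g : G, (Rmap N χ g⁻¹) ∘ₗ (p ∘ₗ (Rmap N χ g)) with hΦ₀def
    set Φ : ↥(indSpace N χ) →ₗ[k] ↥(indSpace N χ) := (Nat.card G : k)⁻¹ • Φ₀ with hΦdef
    have hRU : ∀ (g : G) (v : ↥(indSpace N χ)), v ∈ U' → Rmap N χ g v ∈ U' := by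
      intro g v hv
      exact hUst g (v : G → k) hv
    have hΦ₀_mem : ∀ v, Φ₀ v ∈ U' := by
      intro v
      rw [hΦ₀def]
      simp only [LinearMap.sum_apply, LinearMap.comp_apply]
      exact Submodule.sum_mem _ (fun g _ => hRU g⁻¹ _ (hp_mem _))
    have hΦ₀_fix : ∀ v ∈ U', Φ₀ v = (Nat.card G : k) • v := by
      intro v hv
      rw [hΦ₀def]
      simp only [LinearMap.sum_apply, LinearMap.comp_apply]
      have hterm : ∀ g : G, Rmap N χ g⁻¹ (p (Rmap N χ g v)) = v := by
        intro g
        rw [hp_fix _ (hRU g v hv), Rmap_mul, inv_mul_cancel]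
        refine Subtype.ext (funext fun x => ?_)
        rw [Rmap_apply, mul_one]
      rw [Finset.sum_congr rfl (fun g _ => hterm g), Finset.sum_const, Finset.card_univ,
        ← Nat.card_eq_fintype_card, ← Nat.cast_smul_eq_nsmul k]
    have hΦ_fix : ∀ v ∈ U', Φ v = v := by
      intro v hv
      rw [hΦdef, LinearMap.smul_apply, hΦ₀_fix v hv, smul_smul,
        inv_mul_cancel₀ hcardG, one_smul]
    have hΦ_mem : ∀ v, Φ v ∈ U' := by
      intro v
      rw [hΦdef, LinearMap.smul_apply]
      exact Submodule.smul_mem _ _ (hΦ₀_mem v)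
    have hcomm : ∀ (h : G) (v : ↥(indSpace N χ)),
        Φ₀ (Rmap N χ h v) = Rmap N χ h (Φ₀ v) := by
      intro h v
      rw [hΦ₀def]
      simp only [LinearMap.sum_apply, LinearMap.comp_apply, map_sum]
      have lhs_eq : ∀ g : G, Rmap N χ g⁻¹ (p (Rmap N χ g (Rmap N χ h v)))
          = Rmap N χ g⁻¹ (p (Rmap N χ (g * h) v)) := fun g => by rw [Rmap_mul]
      have rhs_eq : ∀ g : G, Rmap N χ h (Rmap N χ g⁻¹ (p (Rmap N χ g v)))
          = Rmap N χ (h * g⁻¹) (p (Rmap N χ g v)) := fun g => by rw [Rmap_mul]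
      rw [Finset.sum_congr rfl (fun g _ => lhs_eq g),
        Finset.sum_congr rfl (fun g _ => rhs_eq g),
        ← Equiv.sum_comp (Equiv.mulRight h)
          (fun g => Rmap N χ (h * g⁻¹) (p (Rmap N χ g v)))]
      refine Finset.sum_congr rfl (fun g _ => ?_)
      simp only [Equiv.coe_mulRight]
      have : h * (g * h)⁻¹ = g⁻¹ := by group
      rw [this]
    have hΦeq : IsTranslationEquivariant (indSpace N χ) (indSpace N χ) Φ := by
      intro g f f' hf'
      have hf'2 : f' = Rmap N χ g f := Subtype.ext hf'
      have hΦc : Φ f' = Rmap N χ g (Φ f) := by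
        rw [hf'2, hΦdef, LinearMap.smul_apply, LinearMap.smul_apply, hcomm, map_smul]
      rw [hΦc]
      rfl
    obtain ⟨c, hcΦ, -⟩ := endo_scalar N χ hcardN hstab Φ hΦeq
    obtain ⟨f0, hf0U, hf0ne⟩ : ∃ f ∈ U, f ≠ 0 := by
      have := mt (Submodule.eq_bot_iff U).mpr hU0
      push_neg at this
      exact this
    have hfvU' : (⟨f0, hUle hf0U⟩ : ↥(indSpace N χ)) ∈ U' := hf0U
    have hc1 : c = 1 := by
      have hfix := hΦ_fix _ hfvU'
      have hsc := hcΦ (⟨f0, hUle hf0U⟩ : ↥(indSpace N χ))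
      have hne : (⟨f0, hUle hf0U⟩ : ↥(indSpace N χ)) ≠ 0 :=
        fun h => hf0ne (congrArg Subtype.val h)
      have : c • (⟨f0, hUle hf0U⟩ : ↥(indSpace N χ))
          = (1 : k) • (⟨f0, hUle hf0U⟩ : ↥(indSpace N χ)) := by
        rw [one_smul, ← hsc, hfix]
      exact smul_left_injective k hne this
    apply le_antisymm hUle
    intro f hf
    have hmem := hΦ_mem (⟨f, hf⟩ : ↥(indSpace N χ))
    rw [hcΦ, hc1, one_smul] at hmem
    exact hmem
end

section
/- In the setting of a finite Heisenberg triple: let p be an odd prime, K a finite p-group, K⁺ ⊴ K with V = K/K⁺ elementary abelian, χ : K⁺ → k^× a K-invariant character (k algebraically closed, char k ≠ p) whose commutator pairing θ on V is perfect, W ⊆ V a Lagrangian with preimage K_W, and ν a character of K_W extending χ. Then the restriction of Ind_{K_W}^K ν back to K_W decomposes as the direct sum over all characters ν' of K_W extending χ, each occurring with multiplicity one: Res_{K_W} Ind_{K_W}^K ν ≅ ⊕_{ν' ⊇ χ} ν'. Consequently Hom_{kK}(Ind_{K_W}^K ν, Ind_{K_W}^K ν') is one-dimensional for every extension ν' of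 χ. -/
open scoped Classical

/-- The `ν'`-eigenspace for the right translation action of a subgroup `H`. -/
def rightEigen {G : Type*} [Group G] {k : Type*} [Field k] (H : Subgroup G)
    (ν : ↥H →* kˣ) : Submodule k (G → k) where
  carrier := {f | ∀ (w : ↥H) (x : G), f (x * w) = (ν w : k) * f x}
  add_mem' := by
    intro f₁ f₂ h₁ h₂
    intro w x
    simp only [Pi.add_apply, h₁ w x, h₂ w x, mul_add]
  zero_mem' := by
    intro w x
    simp
  smul_mem' := by
    intro c f hf
    intro w x
    simp only [Pi.smul_apply, smul_eq_mul, hf w x]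
    ring

open scoped commutatorElement


open Subgroup

/-- Counting lemma: an injective family of characters of a finite group `G`, all trivial
on a subgroup `B`, has cardinality at most the index of `B`. -/
lemma charCount {G : Type*} [Group G] [Finite G] {k : Type*} [Field k]
    {B : Subgroup G} {A : Type*} [Finite A] (ι : A → (G →* kˣ))
    (hinj : Function.Injective ι) (htriv : ∀ a (b : G), b ∈ B → ι a b = 1) :
    Nat.card A ≤ B.index := by
  classical
  haveI : Fintype A := Fintype.ofFinite A
  haveI : Fintype (G ⧸ B) := Fintype.ofFinite _
  -- descend each character to a function on the quotient
  have hconst : ∀ a (g g' : G), (QuotientGroup.leftRel B) g g' →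
      ((ι a g : k)) = ((ι a g' : k)) := by
    intro a g g' h
    rw [QuotientGroup.leftRel_apply] at h
    have : g' = g * (g⁻¹ * g') := by group
    rw [this, map_mul, htriv a _ h, mul_one]
  let φ : A → (G ⧸ B) → k := fun a => Quotient.lift (fun g => ((ι a g : k)))
    (fun g g' h => hconst a g g' h)
  let R : ((G ⧸ B) → k) →ₗ[k] (G → k) :=
    { toFun := fun f => fun g => f (QuotientGroup.mk g)
      map_add' := fun f f' => rfl
      map_smul' := fun c f => rfl }
  have hli : LinearIndependent k (R ∘ φ) := by
    have base := linearIndependent_monoidHom G k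
    have : LinearIndependent k (fun a : A => ((((Units.coeHom k).comp (ι a)) : G →* k) : G → k)) := by
      apply base.comp
      intro a a' h
      apply hinj
      ext g
      have := DFunLike.congr_fun h g
      exact this
    convert this using 1
    funext a g; rfl
  have hliφ : LinearIndependent k φ := hli.of_comp R
  have := hliφ.fintype_card_le_finrank
  rw [Module.finrank_fintype_fun_eq_card] at this
  rw [Nat.card_eq_fintype_card, Subgroup.index_eq_card, Nat.card_eq_fintype_card]
  exact this



section

variable {K : Type*} [Group K] {k : Type*} [Field k]

/-- Conjugate of a character of a normal subgroup. -/
def conjChar (KW : Subgroup K) [KW.Normal] (ν : ↥KW →* kˣ) (x : K) : ↥KW →* kˣ :=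
  ν.comp (MulAut.conjNormal x).toMonoidHom

lemma conjChar_apply (KW : Subgroup K) [h : KW.Normal] (ν : ↥KW →* kˣ) (x : K)
    (w : ↥KW) : conjChar KW ν x w = ν ⟨x * w * x⁻¹, h.conj_mem w.1 w.2 x⟩ := by
  exact congrArg ν (by ext; simp)

lemma conjChar_conjChar (KW : Subgroup K) [h : KW.Normal] (ν : ↥KW →* kˣ) (x z : K) :
    conjChar KW (conjChar KW ν z) x = conjChar KW ν (z * x) := by
  ext w
  rw [conjChar_apply, conjChar_apply, conjChar_apply]
  congr 1
  ext
  push_cast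
  group

lemma conjChar_one (KW : Subgroup K) [h : KW.Normal] (ν : ↥KW →* kˣ) :
    conjChar KW ν 1 = ν := by
  ext w
  rw [conjChar_apply]
  congr 1
  ext
  simp

/-- The delta function supported on the coset `KW * x`. -/
noncomputable def deltaF (KW : Subgroup K) (ν : ↥KW →* kˣ) (x : K) : K → k :=
  fun y => if h : y * x⁻¹ ∈ KW then ((ν ⟨y * x⁻¹, h⟩ : kˣ) : k) else 0

lemma deltaF_of_mem (KW : Subgroup K) (ν : ↥KW →* kˣ) (x y : K) (h : y * x⁻¹ ∈ KW) :
    deltaF KW ν x y = ((ν ⟨y * x⁻¹, h⟩ : kˣ) : k) := dif_pos h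

lemma deltaF_of_not_mem (KW : Subgroup K) (ν : ↥KW →* kˣ) (x y : K) (h : ¬ y * x⁻¹ ∈ KW) :
    deltaF KW ν x y = 0 := dif_neg h

lemma deltaF_self (KW : Subgroup K) (ν : ↥KW →* kˣ) (x : K) : deltaF KW ν x x = 1 := by
  rw [deltaF_of_mem KW ν x x (by simp [Subgroup.one_mem])]
  have : (⟨x * x⁻¹, by simp [Subgroup.one_mem]⟩ : ↥KW) = 1 := by ext; simp
  rw [this, map_one, Units.val_one]

lemma deltaF_ne_zero (KW : Subgroup K) (ν : ↥KW →* kˣ) (x : K) : deltaF KW ν x ≠ 0 := by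
  intro h
  have := congrFun h x
  rw [deltaF_self] at this
  simp at this

lemma deltaF_mem_indSpace (KW : Subgroup K) (ν : ↥KW →* kˣ) (x : K) :
    ∀ (g : K) (hg : g ∈ KW) (y : K),
      deltaF KW ν x (g * y) = ((ν ⟨g, hg⟩ : kˣ) : k) * deltaF KW ν x y := by
  intro g hg y
  by_cases h : y * x⁻¹ ∈ KW
  · have h2 : (g * y) * x⁻¹ ∈ KW := by
      have : (g * y) * x⁻¹ = g * (y * x⁻¹) := by group
      rw [this]; exact KW.mul_mem hg h
    rw [deltaF_of_mem KW ν x _ h2, deltaF_of_mem KW ν x _ h]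
    have : (⟨g * y * x⁻¹, h2⟩ : ↥KW) = ⟨g, hg⟩ * ⟨y * x⁻¹, h⟩ := by ext; push_cast; group
    rw [this, map_mul, Units.val_mul]
  · have h2 : ¬ (g * y) * x⁻¹ ∈ KW := by
      intro hc
      apply h
      have : y * x⁻¹ = g⁻¹ * ((g * y) * x⁻¹) := by group
      rw [this]; exact KW.mul_mem (KW.inv_mem hg) hc
    rw [deltaF_of_not_mem KW ν x _ h2, deltaF_of_not_mem KW ν x _ h, mul_zero]

lemma deltaF_right_eigen (KW : Subgroup K) [hn : KW.Normal] (ν : ↥KW →* kˣ) (x : K) :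
    ∀ (w : ↥KW) (y : K),
      deltaF KW ν x (y * w) = ((conjChar KW ν x w : kˣ) : k) * deltaF KW ν x y := by
  intro w y
  rw [conjChar_apply]
  by_cases h : y * x⁻¹ ∈ KW
  · have hxw : x * (w : K) * x⁻¹ ∈ KW := hn.conj_mem w.1 w.2 x
    have h2 : (y * w) * x⁻¹ ∈ KW := by
      have : (y * w) * x⁻¹ = (y * x⁻¹) * (x * w * x⁻¹) := by group
      rw [this]; exact KW.mul_mem h hxw
    rw [deltaF_of_mem KW ν x _ h2, deltaF_of_mem KW ν x _ h]
    have : (⟨y * w * x⁻¹, h2⟩ : ↥KW) = ⟨y * x⁻¹, h⟩ * ⟨x * w * x⁻¹, hxw⟩ := by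
      ext; push_cast; group
    rw [this, map_mul, Units.val_mul, mul_comm]
  · have h2 : ¬ (y * w) * x⁻¹ ∈ KW := by
      intro hc
      apply h
      have hxw : x * (w : K) * x⁻¹ ∈ KW := hn.conj_mem w.1 w.2 x
      have : y * x⁻¹ = ((y * w) * x⁻¹) * (x * w * x⁻¹)⁻¹ := by group
      rw [this]; exact KW.mul_mem hc (KW.inv_mem hxw)
    rw [deltaF_of_not_mem KW ν x _ h2, deltaF_of_not_mem KW ν x _ h, mul_zero]

end


section

variable {K : Type*} [Group K] {k : Type*} [Field k]

/-- The commutator-pairing homomorphism `g ↦ (h ↦ χ(⁅g,h⁆))`. -/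
def bigTheta (Kplus : Subgroup K) [hKpN : Kplus.Normal] (χ : ↥Kplus →* kˣ)
    (hcomm : ∀ g h : K, ⁅g, h⁆ ∈ Kplus)
    (hχinv : ∀ (g m : K) (hm : m ∈ Kplus),
      χ ⟨g * m * g⁻¹, hKpN.conj_mem m hm g⟩ = χ ⟨m, hm⟩) :
    K →* (K →* kˣ) where
  toFun g :=
    { toFun := fun h => χ ⟨⁅g, h⁆, hcomm g h⟩
      map_one' := by
        show χ ⟨⁅g, (1:K)⁆, hcomm g 1⟩ = 1
        have : (⟨⁅g, (1:K)⁆, hcomm g 1⟩ : ↥Kplus) = 1 := by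
          ext; simp [commutatorElement_def]
        rw [this, map_one]
      map_mul' := by
        intro h₁ h₂
        show χ ⟨⁅g, h₁ * h₂⁆, hcomm g (h₁ * h₂)⟩
          = χ ⟨⁅g, h₁⁆, hcomm g h₁⟩ * χ ⟨⁅g, h₂⁆, hcomm g h₂⟩
        have key : (⟨⁅g, h₁ * h₂⁆, hcomm g (h₁ * h₂)⟩ : ↥Kplus)
            = ⟨⁅g, h₁⁆, hcomm g h₁⟩
              * ⟨h₁ * ⁅g, h₂⁆ * h₁⁻¹, hKpN.conj_mem _ (hcomm g h₂) h₁⟩ := by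
          ext; simp only [Subgroup.coe_mul, commutatorElement_def]; group
        rw [key, map_mul, hχinv h₁ ⁅g, h₂⁆ (hcomm g h₂)] }
  map_one' := by
    refine MonoidHom.ext fun h => ?_
    have : (⟨⁅(1:K), h⁆, hcomm 1 h⟩ : ↥Kplus) = 1 := by
      ext; simp [commutatorElement_def]
    show χ ⟨⁅(1:K), h⁆, hcomm 1 h⟩ = 1
    rw [this, map_one]
  map_mul' := by
    intro g₁ g₂
    refine MonoidHom.ext fun h => ?_
    show χ ⟨⁅g₁ * g₂, h⁆, hcomm (g₁ * g₂) h⟩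
      = χ ⟨⁅g₁, h⁆, hcomm g₁ h⟩ * χ ⟨⁅g₂, h⁆, hcomm g₂ h⟩
    have key : (⟨⁅g₁ * g₂, h⁆, hcomm (g₁ * g₂) h⟩ : ↥Kplus)
        = ⟨g₁ * ⁅g₂, h⁆ * g₁⁻¹, hKpN.conj_mem _ (hcomm g₂ h) g₁⟩
          * ⟨⁅g₁, h⁆, hcomm g₁ h⟩ := by
      ext; simp only [Subgroup.coe_mul, commutatorElement_def]; group
    rw [key, map_mul, hχinv g₁ ⁅g₂, h⁆ (hcomm g₂ h), mul_comm]

lemma bigTheta_apply (Kplus : Subgroup K) [hKpN : Kplus.Normal] (χ : ↥Kplus →* kˣ)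
    (hcomm : ∀ g h : K, ⁅g, h⁆ ∈ Kplus)
    (hχinv : ∀ (g m : K) (hm : m ∈ Kplus),
      χ ⟨g * m * g⁻¹, hKpN.conj_mem m hm g⟩ = χ ⟨m, hm⟩) (g h : K) :
    bigTheta Kplus χ hcomm hχinv g h = χ ⟨⁅g, h⁆, hcomm g h⟩ := rfl

lemma bigTheta_eq_one_of_mem (Kplus : Subgroup K) [hKpN : Kplus.Normal] (χ : ↥Kplus →* kˣ)
    (hcomm : ∀ g h : K, ⁅g, h⁆ ∈ Kplus)
    (hχinv : ∀ (g m : K) (hm : m ∈ Kplus),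
      χ ⟨g * m * g⁻¹, hKpN.conj_mem m hm g⟩ = χ ⟨m, hm⟩)
    (m : K) (hm : m ∈ Kplus) : bigTheta Kplus χ hcomm hχinv m = 1 := by
  refine MonoidHom.ext fun h => ?_
  show χ ⟨⁅m, h⁆, hcomm m h⟩ = 1
  have key : (⟨⁅m, h⁆, hcomm m h⟩ : ↥Kplus)
      = ⟨m, hm⟩ * ⟨h * m⁻¹ * h⁻¹, hKpN.conj_mem m⁻¹ (Kplus.inv_mem hm) h⟩ := by
    ext; simp only [Subgroup.coe_mul, commutatorElement_def]; group
  rw [key, map_mul, hχinv h m⁻¹ (Kplus.inv_mem hm)]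
  have : (⟨m⁻¹, Kplus.inv_mem hm⟩ : ↥Kplus) = (⟨m, hm⟩)⁻¹ := rfl
  rw [this, map_inv, mul_inv_cancel]

end

section core

variable {K : Type*} [Group K] [Finite K] {k : Type*} [Field k]
variable (Kplus : Subgroup K) [hKpN : Kplus.Normal]
variable (χ : ↥Kplus →* kˣ)
variable (hcomm : ∀ g h : K, ⁅g, h⁆ ∈ Kplus)
variable (hχinv : ∀ (g m : K) (hm : m ∈ Kplus),
      χ ⟨g * m * g⁻¹, hKpN.conj_mem m hm g⟩ = χ ⟨m, hm⟩)
variable (hperf : ∀ g : K, (∀ h : K, χ ⟨⁅g, h⁆, hcomm g h⟩ = 1) → g ∈ Kplus)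
variable (KW : Subgroup K) (hKW : Kplus ≤ KW) [hKWn : KW.Normal]
variable (hisot : ∀ g ∈ KW, ∀ h ∈ KW, χ ⟨⁅g, h⁆, hcomm g h⟩ = 1)
variable (hlag : (Kplus.subgroupOf KW).index ^ 2 = Kplus.index)

include hKW hχinv hperf hisot hlag in
/-- Lemma A: an element pairing trivially with all of `KW` lies in `KW`
(maximality of the Lagrangian). -/
lemma lemmaA (g : K) (hg : ∀ w : K, w ∈ KW → χ ⟨⁅g, w⁆, hcomm g w⟩ = 1) : g ∈ KW := by
  classical
  set m := (Kplus.subgroupOf KW).index with hm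
  have hm0 : m ≠ 0 := Subgroup.index_ne_zero_of_finite
  -- KW.index = m
  have hKWidx : KW.index = m := by
    have h1 : Kplus.relIndex KW * KW.index = Kplus.index := Subgroup.relIndex_mul_index hKW
    have h2 : Kplus.relIndex KW = m := rfl
    rw [h2, ← hlag, pow_two] at h1
    exact Nat.eq_of_mul_eq_mul_left (Nat.pos_of_ne_zero hm0) h1
  -- the restriction homomorphism
  let resW : (K →* kˣ) →* (↥KW →* kˣ) :=
    { toFun := fun η => η.comp KW.subtype
      map_one' := rfl
      map_mul' := fun _ _ => rfl }
  let Θ := resW.comp (bigTheta Kplus χ hcomm hχinv)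
  let N := Θ.ker
  have hmemN : ∀ x : K, x ∈ N ↔ ∀ w : K, w ∈ KW → χ ⟨⁅x, w⁆, hcomm x w⟩ = 1 := by
    intro x
    constructor
    · intro hx w hw
      have := DFunLike.congr_fun (hx : Θ x = 1) (⟨w, hw⟩ : ↥KW)
      exact this
    · intro hx
      refine MonoidHom.ext fun w => ?_
      exact hx w.1 w.2
  have hKWN : KW ≤ N := fun w hw => (hmemN w).2 fun u hu => hisot w hw u hu
  have hKpN' : Kplus ≤ N := le_trans hKW hKWN
  -- the quotient injects into characters of K trivial on KW
  haveI : (Kplus.subgroupOf N).Normal := Subgroup.normal_subgroupOf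
  let ι : (↥N ⧸ (Kplus.subgroupOf N)) → (K →* kˣ) :=
    QuotientGroup.lift (Kplus.subgroupOf N)
      ((bigTheta Kplus χ hcomm hχinv).comp N.subtype)
      (fun x hx => bigTheta_eq_one_of_mem Kplus χ hcomm hχinv x.1 hx)
  have hι : ∀ x : ↥N, ι (QuotientGroup.mk x) = bigTheta Kplus χ hcomm hχinv x.1 :=
    fun x => rfl
  have hinj : Function.Injective ι := by
    intro a b
    induction a using QuotientGroup.induction_on with
    | H x =>
    induction b using QuotientGroup.induction_on with
    | H y =>
    intro hxy
    rw [hι, hι] at hxy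
    have h1 : bigTheta Kplus χ hcomm hχinv ((x⁻¹ * y : ↥N) : K) = 1 := by
      push_cast
      rw [map_mul, map_inv, hxy, inv_mul_cancel]
    have h2 : ((x⁻¹ * y : ↥N) : K) ∈ Kplus := by
      apply hperf
      intro h
      exact DFunLike.congr_fun h1 h
    exact (QuotientGroup.eq).2 h2
  have htriv : ∀ a (b : K), b ∈ KW → ι a b = 1 := by
    intro a
    induction a using QuotientGroup.induction_on with
    | H x =>
    intro b hb
    rw [hι]
    have hx := (hmemN x.1).1 x.2
    exact hx b hb
  have hcard : Nat.card (↥N ⧸ (Kplus.subgroupOf N)) ≤ KW.index :=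
    charCount ι hinj htriv
  -- cardinality comparison
  have hcardN : Nat.card ↥N = Nat.card (↥N ⧸ (Kplus.subgroupOf N)) * Nat.card ↥Kplus := by
    rw [Subgroup.card_eq_card_quotient_mul_card_subgroup (Kplus.subgroupOf N)]
    congr 1
    exact Nat.card_congr (Subgroup.subgroupOfEquivOfLe hKpN').toEquiv
  have hcardKW : Nat.card ↥KW = m * Nat.card ↥Kplus := by
    rw [Subgroup.card_eq_card_quotient_mul_card_subgroup (Kplus.subgroupOf KW)]
    congr 1
    exact Nat.card_congr (Subgroup.subgroupOfEquivOfLe hKW).toEquiv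
  have hle : Nat.card ↥N ≤ Nat.card ↥KW := by
    rw [hcardN, hcardKW, hKWidx] at *
    exact Nat.mul_le_mul_right _ hcard
  -- conclude N = KW
  have hNKW : (KW : Set K) = (N : Set K) :=
    Set.eq_of_subset_of_ncard_le hKWN
      (by rw [← Nat.card_coe_set_eq, ← Nat.card_coe_set_eq]; exact hle)
      (N : Set K).toFinite
  have hNeq : N = KW := SetLike.coe_injective hNKW.symm
  have hgN : g ∈ N := (hmemN g).2 hg
  rw [← hNeq]
  exact hgN

variable (ν : ↥KW →* kˣ)
variable (hν : ∀ (g : K) (hg : g ∈ Kplus), ν ⟨g, hKW hg⟩ = χ ⟨g, hg⟩)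

include hKW hν hχinv in
lemma conjChar_extends (x : K) (g : K) (hg : g ∈ Kplus) :
    conjChar KW ν x ⟨g, hKW hg⟩ = χ ⟨g, hg⟩ := by
  rw [conjChar_apply]
  have h1 : x * g * x⁻¹ ∈ Kplus := hKpN.conj_mem g hg x
  show ν ⟨x * g * x⁻¹, hKW h1⟩ = χ ⟨g, hg⟩
  rw [hν _ h1]
  exact hχinv x g hg

include hKW hisot in
lemma conjChar_fixed (η : ↥KW →* kˣ)
    (hη : ∀ (g : K) (hg : g ∈ Kplus), η ⟨g, hKW hg⟩ = χ ⟨g, hg⟩)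
    (w : K) (hw : w ∈ KW) : conjChar KW η w = η := by
  refine MonoidHom.ext fun u => ?_
  rw [conjChar_apply]
  have hcom : ⁅w, (u : K)⁆ ∈ KW := hKW (hcomm w u)
  have key : (⟨w * (u : K) * w⁻¹, hKWn.conj_mem _ u.2 w⟩ : ↥KW)
      = ⟨⁅w, (u : K)⁆, hcom⟩ * u := by
    ext; simp only [Subgroup.coe_mul, commutatorElement_def]; group
  rw [key, map_mul]
  have : η ⟨⁅w, (u : K)⁆, hcom⟩ = χ ⟨⁅w, (u : K)⁆, hcomm w u⟩ := hη _ (hcomm w u)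
  rw [this, hisot w hw u u.2, one_mul]

include hKW hχinv hperf hisot hlag hν in
lemma mem_of_conjChar_eq (g : K) (hg : conjChar KW ν g = ν) : g ∈ KW := by
  apply lemmaA Kplus χ hcomm hχinv hperf KW hKW hisot hlag
  intro w hw
  have h1 := DFunLike.congr_fun hg (⟨w, hw⟩ : ↥KW)
  rw [conjChar_apply] at h1
  have hcom : ⁅g, w⁆ ∈ KW := hKW (hcomm g w)
  have key : (⟨g * w * g⁻¹, hKWn.conj_mem _ hw g⟩ : ↥KW)
      = ⟨⁅g, w⁆, hcom⟩ * ⟨w, hw⟩ := by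
    ext; simp only [Subgroup.coe_mul, commutatorElement_def]; group
  rw [key, map_mul] at h1
  have h2 : ν ⟨⁅g, w⁆, hcom⟩ = 1 := by
    have h1' : ν ⟨⁅g, w⁆, hcom⟩ * ν ⟨w, hw⟩ = 1 * ν ⟨w, hw⟩ := by rw [h1, one_mul]
    have := congrArg (fun z => z * (ν ⟨w, hw⟩)⁻¹) h1'
    simpa only [mul_assoc, mul_inv_cancel, mul_one, one_mul] using this
  rw [hν _ (hcomm g w)] at h2
  exact h2

include hKW hχinv hperf hisot hlag hν in
lemma conjChar_inj (x y : K) (h : conjChar KW ν x = conjChar KW ν y) : x⁻¹ * y ∈ KW := by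
  have h1 : conjChar KW (conjChar KW ν x) x⁻¹ = conjChar KW (conjChar KW ν y) x⁻¹ := by
    rw [h]
  rw [conjChar_conjChar, conjChar_conjChar, mul_inv_cancel, conjChar_one] at h1
  have h2 : y * x⁻¹ ∈ KW :=
    mem_of_conjChar_eq Kplus χ hcomm hχinv hperf KW hKW hisot hlag ν hν _ h1.symm
  have h3 := hKWn.conj_mem _ (KW.inv_mem h2) x⁻¹
  rw [inv_inv] at h3
  have heq : x⁻¹ * (y * x⁻¹)⁻¹ * x = (x⁻¹ * y)⁻¹ := by group
  rw [heq] at h3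
  simpa using KW.inv_mem h3

include hKW hχinv hperf hisot hlag hν in
lemma conjChar_surj (ν' : ↥KW →* kˣ)
    (hν' : ∀ (g : K) (hg : g ∈ Kplus), ν' ⟨g, hKW hg⟩ = χ ⟨g, hg⟩) :
    ∃ x : K, conjChar KW ν x = ν' := by
  classical
  by_contra hne
  push_neg at hne
  -- the map from the quotient
  have hconst : ∀ x y : K, (QuotientGroup.leftRel KW) x y →
      conjChar KW ν x * ν⁻¹ = conjChar KW ν y * ν⁻¹ := by
    intro x y hxy
    rw [QuotientGroup.leftRel_apply] at hxy
    congr 1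
    have hy : y = x * (x⁻¹ * y) := by group
    rw [hy, ← conjChar_conjChar]
    exact (conjChar_fixed Kplus χ hcomm KW hKW hisot (conjChar KW ν x)
      (fun g hg => conjChar_extends Kplus χ hχinv KW hKW ν hν x g hg) _ hxy).symm
  let e : (K ⧸ KW) → (↥KW →* kˣ) :=
    Quotient.lift (fun x => conjChar KW ν x * ν⁻¹) hconst
  have he : ∀ x : K, e (QuotientGroup.mk x) = conjChar KW ν x * ν⁻¹ := fun _ => rfl
  let ι : ((K ⧸ KW) ⊕ Unit) → (↥KW →* kˣ) := Sum.elim e (fun _ => ν' * ν⁻¹)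
  have hcanc : ∀ a b : ↥KW →* kˣ, a * ν⁻¹ = b * ν⁻¹ → a = b := by
    intro a b h
    ext w
    have := DFunLike.congr_fun h w
    simp only [MonoidHom.mul_apply, MonoidHom.inv_apply] at this
    have h2 : a w = b w := mul_right_cancel this
    exact congrArg Units.val h2
  have hinj : Function.Injective ι := by
    rintro (a | a) (b | b) hab
    · induction a using QuotientGroup.induction_on with
      | H x =>
      induction b using QuotientGroup.induction_on with
      | H y =>
      have : conjChar KW ν x = conjChar KW ν y := by
        have := hab
        simp only [ι, Sum.elim_inl, he] at this
        exact hcanc _ _ this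
      have := conjChar_inj Kplus χ hcomm hχinv hperf KW hKW hisot hlag ν hν x y this
      exact congrArg Sum.inl ((QuotientGroup.eq).2 this)
    · exfalso
      induction a using QuotientGroup.induction_on with
      | H x =>
      have : conjChar KW ν x = ν' := by
        have := hab
        simp only [ι, Sum.elim_inl, Sum.elim_inr, he] at this
        exact hcanc _ _ this
      exact hne x this
    · exfalso
      induction b using QuotientGroup.induction_on with
      | H x =>
      have : conjChar KW ν x = ν' := by
        have := hab
        simp only [ι, Sum.elim_inl, Sum.elim_inr, he] at this
        exact (hcanc _ _ this).symm
      exact hne x this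
    · rfl
  have htriv : ∀ a (b : ↥KW), b ∈ Kplus.subgroupOf KW → ι a b = 1 := by
    have hval : ∀ (η : ↥KW →* kˣ)
        (hη : ∀ (g : K) (hg : g ∈ Kplus), η ⟨g, hKW hg⟩ = χ ⟨g, hg⟩)
        (b : ↥KW), b ∈ Kplus.subgroupOf KW → (η * ν⁻¹) b = 1 := by
      intro η hη b hb
      have hb' : (b : K) ∈ Kplus := hb
      have h1 : η b = χ ⟨(b : K), hb'⟩ := hη _ hb'
      have h2 : ν b = χ ⟨(b : K), hb'⟩ := hν _ hb'
      show η b * (ν b)⁻¹ = 1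
      rw [h1, h2, mul_inv_cancel]
    rintro (a | a) b hb
    · induction a using QuotientGroup.induction_on with
      | H x =>
      show (conjChar KW ν x * ν⁻¹) b = 1
      exact hval _ (fun g hg => conjChar_extends Kplus χ hχinv KW hKW ν hν x g hg) b hb
    · exact hval _ (fun g hg => hν' g hg) b hb
  have hcount : Nat.card ((K ⧸ KW) ⊕ Unit) ≤ (Kplus.subgroupOf KW).index :=
    charCount ι hinj htriv
  have hKWidx : KW.index = (Kplus.subgroupOf KW).index := by
    have h1 : Kplus.relIndex KW * KW.index = Kplus.index := Subgroup.relIndex_mul_index hKW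
    have h2 : Kplus.relIndex KW = (Kplus.subgroupOf KW).index := rfl
    rw [h2, ← hlag, pow_two] at h1
    exact Nat.eq_of_mul_eq_mul_left
      (Nat.pos_of_ne_zero Subgroup.index_ne_zero_of_finite) h1
  rw [Nat.card_sum] at hcount
  have hq : Nat.card (K ⧸ KW) = KW.index := (Subgroup.index_eq_card KW).symm
  have hpu : Nat.card Unit = 1 := Nat.card_unique
  rw [hq, hKWidx, hpu] at hcount
  omega

lemma mem_indSpace_iff (f : K → k) :
    f ∈ indSpace KW ν ↔ ∀ (g : K) (hg : g ∈ KW) (x : K),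
      f (g * x) = ((ν ⟨g, hg⟩ : kˣ) : k) * f x := Iff.rfl

lemma mem_rightEigen_iff (f : K → k) (η : ↥KW →* kˣ) :
    f ∈ rightEigen KW η ↔ ∀ (w : ↥KW) (x : K),
      f (x * w) = ((η w : kˣ) : k) * f x := Iff.rfl

lemma deltaF_mem_indSpace' (x : K) : deltaF KW ν x ∈ indSpace KW ν :=
  (mem_indSpace_iff KW ν _).2 (deltaF_mem_indSpace KW ν x)

lemma deltaF_mem_rightEigen' (x : K) :
    deltaF KW ν x ∈ rightEigen KW (conjChar KW ν x) :=
  (mem_rightEigen_iff KW _ _).2 (deltaF_right_eigen KW ν x)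

omit [Finite K] in
lemma pointEigen (f : K → k) (hf : f ∈ indSpace KW ν) (x : K) (w : ↥KW) :
    f (x * w) = ((conjChar KW ν x w : kˣ) : k) * f x := by
  have hmem : x * (w : K) * x⁻¹ ∈ KW := hKWn.conj_mem _ w.2 x
  have hx : x * (w : K) = (x * w * x⁻¹) * x := by group
  rw [hx, hf _ hmem x, conjChar_apply]

omit [Finite K] in
lemma eigen_char_eq (f : K → k) (hf : f ∈ indSpace KW ν) (η : ↥KW →* kˣ)
    (hfe : f ∈ rightEigen KW η) (x : K) (hfx : f x ≠ 0) :
    conjChar KW ν x = η := by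
  ext w
  have h1 := pointEigen KW ν f hf x w
  have h2 := hfe w x
  rw [h1] at h2
  exact mul_right_cancel₀ hfx h2

include hχinv hperf hisot hlag hν in
lemma inter_eq_span (x : K) :
    indSpace KW ν ⊓ rightEigen KW (conjChar KW ν x)
      = Submodule.span k {deltaF KW ν x} := by
  apply le_antisymm
  · rintro f ⟨hf1, hf2⟩
    rw [Submodule.mem_span_singleton]
    refine ⟨f x, ?_⟩
    funext y
    by_cases h : y * x⁻¹ ∈ KW
    · have hy : y = (y * x⁻¹) * x := by group
      have := hf1 (y * x⁻¹) h x
      rw [← hy] at this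
      rw [Pi.smul_apply, deltaF_of_mem KW ν x y h, smul_eq_mul, this, mul_comm]
    · rw [Pi.smul_apply, deltaF_of_not_mem KW ν x y h, smul_eq_mul, mul_zero]
      symm
      by_contra hfy
      have hchar := eigen_char_eq KW ν f hf1 _ hf2 y hfy
      have hxy := conjChar_inj Kplus χ hcomm hχinv hperf KW hKW hisot hlag ν hν y x hchar
      apply h
      have := hKWn.conj_mem _ hxy y
      have heq : y * (y⁻¹ * x) * y⁻¹ = x * y⁻¹ := by group
      rw [heq] at this
      have := KW.inv_mem this
      rwa [mul_inv_rev, inv_inv] at this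
  · rw [Submodule.span_le, Set.singleton_subset_iff]
    exact ⟨deltaF_mem_indSpace' KW ν x, deltaF_mem_rightEigen' KW ν x⟩

include hKW hisot hν in
lemma conjChar_left (g y : K) (hg : g ∈ KW) :
    conjChar KW ν (g * y) = conjChar KW ν y := by
  rw [← conjChar_conjChar,
    conjChar_fixed Kplus χ hcomm KW hKW hisot ν (fun a ha => hν a ha) g hg]

include hKW hisot hν in
lemma conjChar_right (y w : K) (hw : w ∈ KW) :
    conjChar KW ν (y * w) = conjChar KW ν y := by
  have h1 : y * w = (y * w * y⁻¹) * y := by group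
  rw [h1, conjChar_left Kplus χ hcomm KW hKW hisot ν hν _ y (hKWn.conj_mem _ hw y)]

omit [Finite K] in
lemma deltaF_translate (x y : K) :
    deltaF KW ν x y = deltaF KW ν 1 (y * x⁻¹) := by
  simp [deltaF]

omit [Finite K] in
include hKWn in
lemma sum_deltaF [Fintype K] (f : K → k) (hf : f ∈ indSpace KW ν) (y : K) :
    ∑ x : K, f x * deltaF KW ν x y = (Nat.card ↥KW : k) * f y := by
  classical
  have hterm : ∀ x : K, f x * deltaF KW ν x y = if y * x⁻¹ ∈ KW then f y else 0 := by
    intro x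
    by_cases h : y * x⁻¹ ∈ KW
    · rw [deltaF_of_mem KW ν x y h, if_pos h]
      have hx : x = (y * x⁻¹)⁻¹ * y := by group
      have h2 : (y * x⁻¹)⁻¹ ∈ KW := KW.inv_mem h
      have h3 := hf _ h2 y
      rw [show f x = f ((y * x⁻¹)⁻¹ * y) from by rw [← hx], h3]
      have hval : (⟨(y * x⁻¹)⁻¹, h2⟩ : ↥KW) = (⟨y * x⁻¹, h⟩ : ↥KW)⁻¹ := rfl
      rw [hval, map_inv]
      have key : ∀ (u : kˣ) (c : k), ((↑(u⁻¹) : k) * c) * ↑u = c := by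
        intro u c
        rw [mul_comm ((↑(u⁻¹) : k)) c, mul_assoc, Units.inv_mul, mul_one]
      exact key _ _
    · rw [deltaF_of_not_mem KW ν x y h, if_neg h, mul_zero]
  rw [Finset.sum_congr rfl (fun x _ => hterm x), Finset.sum_ite, Finset.sum_const,
    Finset.sum_const_zero, add_zero]
  have hcard : (Finset.univ.filter (fun x : K => y * x⁻¹ ∈ KW)).card = Nat.card ↥KW := by
    have e : {x : K // y * x⁻¹ ∈ KW} ≃ ↥KW :=
      { toFun := fun z => ⟨y * z.1⁻¹, z.2⟩
        invFun := fun g => ⟨(g : K)⁻¹ * y, by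
          have : y * ((g : K)⁻¹ * y)⁻¹ = (g : K) := by group
          rw [this]; exact g.2⟩
        left_inv := fun z => by
          ext
          show ((y * z.1⁻¹ : K))⁻¹ * y = z.1
          group
        right_inv := fun g => by
          ext
          show y * ((g : K)⁻¹ * y)⁻¹ = (g : K)
          group }
    rw [← Fintype.card_subtype, Fintype.card_congr e, Nat.card_eq_fintype_card]
  rw [hcard, nsmul_eq_mul]

end core
/-- Mackey decomposition in the finite Heisenberg setting: the restriction to `K_W` of
`Ind_{K_W}^K ν` decomposes as the direct sum, over all characters `ν'` of `K_W`
extending `χ`, of the `ν'`-eigenlines (each of dimension one); consequently the space of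
`K`-equivariant homomorphisms `Ind_{K_W}^K ν → Ind_{K_W}^K ν'` is one-dimensional for
every extension `ν'` of `χ`. -/
theorem stmt13 {p : ℕ} (hp : p.Prime) (hodd : Odd p)
    {K : Type*} [Group K] [Finite K] (hK : IsPGroup p K)
    (Kplus : Subgroup K) [hKpN : Kplus.Normal]
    (hcomm : ∀ g h : K, ⁅g, h⁆ ∈ Kplus)
    (helem : ∀ g : K, g ^ p ∈ Kplus)
    {k : Type*} [Field k] [IsAlgClosed k] (hchar : (p : k) ≠ 0)
    (χ : ↥Kplus →* kˣ)
    (hχinv : ∀ (g m : K) (hm : m ∈ Kplus),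
      χ ⟨g * m * g⁻¹, hKpN.conj_mem m hm g⟩ = χ ⟨m, hm⟩)
    (hperf : ∀ g : K, (∀ h : K, χ ⟨⁅g, h⁆, hcomm g h⟩ = 1) → g ∈ Kplus)
    (KW : Subgroup K) (hKW : Kplus ≤ KW) (hKWn : KW.Normal)
    (hisot : ∀ g ∈ KW, ∀ h ∈ KW, χ ⟨⁅g, h⁆, hcomm g h⟩ = 1)
    (hlag : (Kplus.subgroupOf KW).index ^ 2 = Kplus.index)
    (ν : ↥KW →* kˣ)
    (hν : ∀ (g : K) (hg : g ∈ Kplus), ν ⟨g, hKW hg⟩ = χ ⟨g, hg⟩) :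
    (∀ νe : {ν' : ↥KW →* kˣ //
        ∀ (g : K) (hg : g ∈ Kplus), ν' ⟨g, hKW hg⟩ = χ ⟨g, hg⟩},
      Module.finrank k ↥(indSpace KW ν ⊓ rightEigen KW νe.1) = 1) ∧
    (∀ νe : {ν' : ↥KW →* kˣ //
        ∀ (g : K) (hg : g ∈ Kplus), ν' ⟨g, hKW hg⟩ = χ ⟨g, hg⟩},
      (indSpace KW ν ⊓ rightEigen KW νe.1) ⊓
        (⨆ νe' : {ν' : ↥KW →* kˣ //
            ∀ (g : K) (hg : g ∈ Kplus), ν' ⟨g, hKW hg⟩ = χ ⟨g, hg⟩},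
          ⨆ _ : νe' ≠ νe, indSpace KW ν ⊓ rightEigen KW νe'.1) = ⊥) ∧
    ((⨆ νe : {ν' : ↥KW →* kˣ //
        ∀ (g : K) (hg : g ∈ Kplus), ν' ⟨g, hKW hg⟩ = χ ⟨g, hg⟩},
      indSpace KW ν ⊓ rightEigen KW νe.1) = indSpace KW ν) ∧
    (∀ ν' : ↥KW →* kˣ,
      (∀ (g : K) (hg : g ∈ Kplus), ν' ⟨g, hKW hg⟩ = χ ⟨g, hg⟩) →
      ∃ Φ₀ : ↥(indSpace KW ν) →ₗ[k] ↥(indSpace KW ν'),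
        IsTranslationEquivariant (indSpace KW ν) (indSpace KW ν') Φ₀ ∧ Φ₀ ≠ 0 ∧
        ∀ Φ : ↥(indSpace KW ν) →ₗ[k] ↥(indSpace KW ν'),
          IsTranslationEquivariant (indSpace KW ν) (indSpace KW ν') Φ →
          ∃ c : k, Φ = c • Φ₀) := by
  classical
  haveI := hKWn
  letI : Fintype K := Fintype.ofFinite K
  have hsurj : ∀ ν' : ↥KW →* kˣ,
      (∀ (g : K) (hg : g ∈ Kplus), ν' ⟨g, hKW hg⟩ = χ ⟨g, hg⟩) →
      ∃ x : K, conjChar KW ν x = ν' :=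
    fun ν' hν' => conjChar_surj Kplus χ hcomm hχinv hperf KW hKW hisot hlag ν hν ν' hν'
  have hspan : ∀ x : K,
      indSpace KW ν ⊓ rightEigen KW (conjChar KW ν x)
        = Submodule.span k {deltaF KW ν x} :=
    fun x => inter_eq_span Kplus χ hcomm hχinv hperf KW hKW hisot hlag ν hν x
  -- Part 1
  have part1 : ∀ νe : {ν' : ↥KW →* kˣ //
      ∀ (g : K) (hg : g ∈ Kplus), ν' ⟨g, hKW hg⟩ = χ ⟨g, hg⟩},
      Module.finrank k ↥(indSpace KW ν ⊓ rightEigen KW νe.1) = 1 := by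
    intro νe
    obtain ⟨x, hx⟩ := hsurj νe.1 νe.2
    rw [← hx, hspan x]
    exact finrank_span_singleton (deltaF_ne_zero KW ν x)
  refine ⟨part1, ?_, ?_, ?_⟩
  -- Part 2
  · intro νe
    let Z : Submodule k (K → k) :=
      { carrier := {f | ∀ x : K, conjChar KW ν x = νe.1 → f x = 0}
        add_mem' := by
          intro f g hf hg x hx
          simp only [Pi.add_apply, hf x hx, hg x hx, add_zero]
        zero_mem' := fun x hx => rfl
        smul_mem' := by
          intro c f hf x hx
          simp only [Pi.smul_apply, hf x hx, smul_zero] }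
    have hsupZ : (⨆ νe' : {ν' : ↥KW →* kˣ //
        ∀ (g : K) (hg : g ∈ Kplus), ν' ⟨g, hKW hg⟩ = χ ⟨g, hg⟩},
        ⨆ _ : νe' ≠ νe, indSpace KW ν ⊓ rightEigen KW νe'.1) ≤ Z := by
      refine iSup_le fun νe' => iSup_le fun hne => ?_
      rintro f ⟨hf1, hf2⟩ x hx
      by_contra hfx
      have hcc := eigen_char_eq KW ν f hf1 νe'.1 hf2 x hfx
      exact hne (Subtype.ext (hcc.symm.trans hx))
    rw [eq_bot_iff]
    rintro f ⟨⟨hf1, hf2⟩, hf3⟩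
    have hfZ := hsupZ hf3
    rw [Submodule.mem_bot]
    funext x
    show f x = 0
    by_cases hx : conjChar KW ν x = νe.1
    · exact hfZ x hx
    · by_contra hfx
      exact hx (eigen_char_eq KW ν f hf1 νe.1 hf2 x hfx)
  -- Part 3
  · apply le_antisymm
    · exact iSup_le fun νe => inf_le_left
    · intro f hf
      let piece : (↥KW →* kˣ) → (K → k) :=
        fun η y => if conjChar KW ν y = η then f y else 0
      let s : Finset (↥KW →* kˣ) := Finset.image (fun x : K => conjChar KW ν x) Finset.univ
      have hsum : f = ∑ η ∈ s, piece η := by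
        funext y
        rw [Finset.sum_apply]
        show f y = ∑ η ∈ s, if conjChar KW ν y = η then f y else 0
        rw [Finset.sum_ite_eq s (conjChar KW ν y) (fun _ => f y),
          if_pos (Finset.mem_image_of_mem _ (Finset.mem_univ y))]
      rw [hsum]
      refine Submodule.sum_mem _ fun η hη => ?_
      obtain ⟨x, _, hx⟩ := Finset.mem_image.1 hη
      have hext : ∀ (g : K) (hg : g ∈ Kplus), η ⟨g, hKW hg⟩ = χ ⟨g, hg⟩ := by
        intro g hg
        rw [← hx]
        exact conjChar_extends Kplus χ hχinv KW hKW ν hν x g hg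
      have hmem : piece η ∈ indSpace KW ν ⊓ rightEigen KW η := by
        constructor
        · intro g hg y
          show (if conjChar KW ν (g * y) = η then f (g * y) else 0)
            = _ * (if conjChar KW ν y = η then f y else 0)
          rw [conjChar_left Kplus χ hcomm KW hKW hisot ν hν g y hg]
          by_cases hyy : conjChar KW ν y = η
          · rw [if_pos hyy, if_pos hyy, hf g hg y]
          · rw [if_neg hyy, if_neg hyy, mul_zero]
        · intro w y
          show (if conjChar KW ν (y * w) = η then f (y * w) else 0)
            = _ * (if conjChar KW ν y = η then f y else 0)
          rw [conjChar_right Kplus χ hcomm KW hKW hisot ν hν y w w.2]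
          by_cases hyy : conjChar KW ν y = η
          · rw [if_pos hyy, if_pos hyy, pointEigen KW ν f hf y w, hyy]
          · rw [if_neg hyy, if_neg hyy, mul_zero]
      exact le_iSup (fun νe : {ν' : ↥KW →* kˣ //
          ∀ (g : K) (hg : g ∈ Kplus), ν' ⟨g, hKW hg⟩ = χ ⟨g, hg⟩} =>
          indSpace KW ν ⊓ rightEigen KW νe.1) ⟨η, hext⟩ hmem
  -- Part 4
  · intro ν' hν'
    obtain ⟨x₁, hx₁⟩ := hsurj ν' hν'
    have hmemΦ : ∀ f : ↥(indSpace KW ν),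
        (fun y => (f : K → k) (x₁ * y)) ∈ indSpace KW ν' := by
      intro f
      refine (mem_indSpace_iff KW ν' _).2 fun g hg y => ?_
      have hgm : x₁ * g * x₁⁻¹ ∈ KW := hKWn.conj_mem g hg x₁
      have h1 : x₁ * (g * y) = (x₁ * g * x₁⁻¹) * (x₁ * y) := by group
      show (f : K → k) (x₁ * (g * y)) = _
      rw [h1, f.2 _ hgm (x₁ * y)]
      congr 1
      have h2 := DFunLike.congr_fun hx₁ (⟨g, hg⟩ : ↥KW)
      rw [conjChar_apply] at h2
      exact congrArg Units.val h2
    let Φ₀ : ↥(indSpace KW ν) →ₗ[k] ↥(indSpace KW ν') :=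
      { toFun := fun f => ⟨fun y => (f : K → k) (x₁ * y), hmemΦ f⟩
        map_add' := fun f g => rfl
        map_smul' := fun c f => rfl }
    have hΦ₀equi : IsTranslationEquivariant (indSpace KW ν) (indSpace KW ν') Φ₀ := by
      intro g f f' hff'
      funext y
      show (f' : K → k) (x₁ * y) = (f : K → k) (x₁ * (y * g))
      rw [congrFun hff' (x₁ * y)]
      exact congrArg (f : K → k) (mul_assoc x₁ y g)
    have hΔ1 : deltaF KW ν 1 ∈ indSpace KW ν := deltaF_mem_indSpace' KW ν 1
    set Δ1 : ↥(indSpace KW ν) := ⟨deltaF KW ν 1, hΔ1⟩ with hΔ1def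
    have hΦ₀val : (Φ₀ Δ1 : K → k) x₁⁻¹ = 1 := by
      show deltaF KW ν 1 (x₁ * x₁⁻¹) = 1
      rw [mul_inv_cancel]
      exact deltaF_self KW ν 1
    have hΦ₀0 : Φ₀ ≠ 0 := by
      intro h0
      have hz : (Φ₀ Δ1 : K → k) x₁⁻¹ = 0 := by rw [h0]; rfl
      rw [hΦ₀val] at hz
      exact one_ne_zero hz
    -- any equivariant map sends Δ1 into the ν-eigenspace
    have heig : ∀ (Φ : ↥(indSpace KW ν) →ₗ[k] ↥(indSpace KW ν')),
        IsTranslationEquivariant (indSpace KW ν) (indSpace KW ν') Φ →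
        ((Φ Δ1 : K → k)) ∈ rightEigen KW ν := by
      intro Φ hΦ
      refine (mem_rightEigen_iff KW _ _).2 fun w y => ?_
      have hf' : ((((ν w : kˣ) : k) • Δ1 : ↥(indSpace KW ν)) : K → k)
          = fun x => (Δ1 : K → k) (x * w) := by
        funext x
        show ((ν w : kˣ) : k) * deltaF KW ν 1 x = deltaF KW ν 1 (x * w)
        rw [deltaF_right_eigen KW ν 1 w x, conjChar_one]
      have h2 := hΦ w Δ1 (((ν w : kˣ) : k) • Δ1) hf'
      rw [map_smul] at h2
      have h3 := congrFun h2 y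
      rw [SetLike.val_smul, Pi.smul_apply, smul_eq_mul] at h3
      exact h3.symm
    -- the ν-eigenline in Ind ν'
    obtain ⟨x₂, hx₂⟩ := conjChar_surj Kplus χ hcomm hχinv hperf KW hKW hisot hlag ν' hν' ν hν
    have hspan2 : indSpace KW ν' ⊓ rightEigen KW ν
        = Submodule.span k {deltaF KW ν' x₂} := by
      rw [← hx₂]
      exact inter_eq_span Kplus χ hcomm hχinv hperf KW hKW hisot hlag ν' hν' x₂
    have hΦ₀line : ∃ b : k, b • deltaF KW ν' x₂ = (Φ₀ Δ1 : K → k) := by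
      rw [← Submodule.mem_span_singleton, ← hspan2]
      exact ⟨(Φ₀ Δ1).2, heig Φ₀ hΦ₀equi⟩
    obtain ⟨b, hb⟩ := hΦ₀line
    have hbne : b ≠ 0 := by
      intro hb0
      rw [hb0, zero_smul] at hb
      have := congrFun hb x₁⁻¹
      rw [hΦ₀val] at this
      exact one_ne_zero this.symm
    refine ⟨Φ₀, hΦ₀equi, hΦ₀0, ?_⟩
    intro Φ hΦ
    have hΦline : ∃ a : k, a • deltaF KW ν' x₂ = (Φ Δ1 : K → k) := by
      rw [← Submodule.mem_span_singleton, ← hspan2]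
      exact ⟨(Φ Δ1).2, heig Φ hΦ⟩
    obtain ⟨a, ha⟩ := hΦline
    refine ⟨a * b⁻¹, ?_⟩
    set c : k := a * b⁻¹ with hcdef
    set Ψ : ↥(indSpace KW ν) →ₗ[k] ↥(indSpace KW ν') := Φ - c • Φ₀ with hΨdef
    have hΨΔ1 : Ψ Δ1 = 0 := by
      apply Subtype.ext
      show ((Φ - c • Φ₀) Δ1 : K → k) = 0
      rw [LinearMap.sub_apply, LinearMap.smul_apply]
      have hcoe : ((Φ Δ1 - c • Φ₀ Δ1 : ↥(indSpace KW ν')) : K → k)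
          = (Φ Δ1 : K → k) - c • (Φ₀ Δ1 : K → k) := rfl
      rw [hcoe, ← ha, ← hb, smul_smul]
      rw [hcdef, mul_assoc, inv_mul_cancel₀ hbne, mul_one]
      exact sub_self _
    have hΨequi : IsTranslationEquivariant (indSpace KW ν) (indSpace KW ν') Ψ := by
      intro g f f' hff'
      funext y
      have e1 := congrFun (hΦ g f f' hff') y
      have e2 := congrFun (hΦ₀equi g f f' hff') y
      show ((Φ - c • Φ₀) f' : K → k) y = ((Φ - c • Φ₀) f : K → k) (y * g)
      rw [LinearMap.sub_apply, LinearMap.sub_apply, LinearMap.smul_apply,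
        LinearMap.smul_apply]
      have hcoe : ∀ (u v : ↥(indSpace KW ν')) (z : K),
          ((u - c • v : ↥(indSpace KW ν')) : K → k) z = (u : K → k) z - c * (v : K → k) z :=
        fun u v z => rfl
      rw [hcoe, hcoe, e1, e2]
    have hΨΔx : ∀ x : K, Ψ (⟨deltaF KW ν x, deltaF_mem_indSpace' KW ν x⟩
        : ↥(indSpace KW ν)) = 0 := by
      intro x
      have htrans : ((⟨deltaF KW ν x, deltaF_mem_indSpace' KW ν x⟩
          : ↥(indSpace KW ν)) : K → k) = fun y => (Δ1 : K → k) (y * x⁻¹) := by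
        funext y
        exact deltaF_translate KW ν x y
      have h2 := hΨequi x⁻¹ Δ1 _ htrans
      apply Subtype.ext
      rw [h2]
      funext y
      show (Ψ Δ1 : K → k) (y * x⁻¹) = (0 : K → k) y
      rw [hΨΔ1]
      rfl
    have hcardne : ((Nat.card ↥KW : ℕ) : k) ≠ 0 := by
      haveI : Fact p.Prime := ⟨hp⟩
      obtain ⟨e, he⟩ := IsPGroup.exists_card_eq (hK.to_subgroup KW)
      rw [he, Nat.cast_pow]
      exact pow_ne_zero e hchar
    have hΨf : ∀ f : ↥(indSpace KW ν), Ψ f = 0 := by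
      intro f
      have hkey : ((Nat.card ↥KW : ℕ) : k) • f
          = ∑ x : K, (f : K → k) x • (⟨deltaF KW ν x, deltaF_mem_indSpace' KW ν x⟩
            : ↥(indSpace KW ν)) := by
        apply Subtype.ext
        funext y
        rw [SetLike.val_smul, Pi.smul_apply, smul_eq_mul]
        have hcoe : ((∑ x : K, (f : K → k) x • (⟨deltaF KW ν x,
            deltaF_mem_indSpace' KW ν x⟩ : ↥(indSpace KW ν))
              : ↥(indSpace KW ν)) : K → k) y
            = ∑ x : K, (f : K → k) x * deltaF KW ν x y := by
          rw [AddSubmonoidClass.coe_finset_sum, Finset.sum_apply]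
          congr 1
        rw [hcoe, sum_deltaF KW ν f f.2 y]
      have h2 := congrArg Ψ hkey
      rw [map_smul, map_sum] at h2
      have h3 : (∑ x : K, Ψ ((f : K → k) x • (⟨deltaF KW ν x,
          deltaF_mem_indSpace' KW ν x⟩ : ↥(indSpace KW ν)))) = 0 := by
        refine Finset.sum_eq_zero fun x _ => ?_
        rw [map_smul, hΨΔx x, smul_zero]
      rw [h3] at h2
      have := smul_eq_zero.1 h2
      rcases this with h | h
      · exact absurd h hcardne
      · exact h
    apply LinearMap.ext
    intro f
    have := hΨf f
    rw [hΨdef, LinearMap.sub_apply] at this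
    exact sub_eq_zero.1 this
end
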